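/- arXiv:1805.03063 — 7 statements merged into one kernel-verified Lean document; each statement's English description precedes it below -/
import Mathlib

section
/- For every u in C_c^∞(ℝ^d \ {0}) with d ≥ 3, the integral of |∇u|² over ℝ^d is at least ((d-2)²/4) times the integral of |u(x)|²/|x|² over ℝ^d. -/
set_option maxHeartbeats 1000000

open MeasureTheory Set

lemma insertNth_affine (n : ℕ) (i : Fin (n+1)) (y : Fin n → ℝ) (t : ℝ) :
    (i.insertNth t y : Fin (n+1) → ℝ)
      = (i.insertNth 0 y : Fin (n+1) → ℝ) + t • (Pi.single i 1 : Fin (n+1) → ℝ) := by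
  funext j
  refine Fin.succAboveCases i ?_ ?_ j
  · simp [Fin.insertNth_apply_same]
  · intro k
    simp [Fin.insertNth_apply_succAbove, Pi.single_eq_of_ne (Fin.succAbove_ne i k)]

lemma mp_pfsa (n : ℕ) (i : Fin (n+1)) :
    MeasurePreserving (MeasurableEquiv.piFinSuccAbove (fun _ : Fin (n+1) => ℝ) i)
      (volume : Measure (Fin (n+1) → ℝ)) ((volume : Measure ℝ).prod (volume : Measure (Fin n → ℝ))) := by
  have h := measurePreserving_piFinSuccAbove (fun _ : Fin (n+1) => (volume : Measure ℝ)) i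
  rw [volume_pi]
  convert h using 2 <;> rfl

lemma oneDim_integral_deriv (f : ℝ → ℝ) (hf : ContDiff ℝ 1 f)
    (h2f : HasCompactSupport f) : ∫ x, deriv f x = 0 := by
  have hi : Integrable (deriv f) :=
    (hf.continuous_deriv le_rfl).integrable_of_hasCompactSupport h2f.deriv
  have h := intervalIntegral.integral_Iic_add_Ioi (b := (0:ℝ)) hi.integrableOn hi.integrableOn
  rw [← h, h2f.integral_Iic_deriv_eq hf, h2f.integral_Ioi_deriv_eq hf]
  ring

lemma pi_integral_fderiv (n : ℕ) (f : (Fin (n+1) → ℝ) → ℝ) (hf : ContDiff ℝ 1 f)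
    (h2f : HasCompactSupport f) (i : Fin (n+1)) :
    ∫ x, fderiv ℝ f x (Pi.single i 1) = 0 := by
  set g : (Fin (n+1) → ℝ) → ℝ := fun x => fderiv ℝ f x (Pi.single i 1) with hgdef
  have hg : Continuous g :=
    ((ContinuousLinearMap.apply ℝ ℝ ((Pi.single i 1 : Fin (n+1) → ℝ))).continuous).comp
      (hf.continuous_fderiv one_ne_zero)
  have hgi : Integrable g :=
    hg.integrable_of_hasCompactSupport (h2f.fderiv_apply ℝ (Pi.single i 1))
  set e := MeasurableEquiv.piFinSuccAbove (fun _ : Fin (n+1) => ℝ) i with hedef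
  have hmp := (mp_pfsa n i).symm
  have h1 : ∫ x, g x = ∫ p : ℝ × (Fin n → ℝ), g (e.symm p) ∂((volume : Measure ℝ).prod volume) :=
    (hmp.integral_comp e.symm.measurableEmbedding g).symm
  have hgi2 : Integrable (fun p : ℝ × (Fin n → ℝ) => g (e.symm p)) ((volume : Measure ℝ).prod volume) :=
    (hmp.integrable_comp_emb e.symm.measurableEmbedding).2 hgi
  rw [h1, integral_prod_symm _ hgi2]
  have key : ∀ y : Fin n → ℝ, (∫ t : ℝ, g (e.symm (t, y))) = 0 := by
    intro y
    have hφd : ∀ t : ℝ, HasDerivAt (fun s => f (i.insertNth s y)) (g (i.insertNth t y)) t := by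
      intro t
      have hc : HasDerivAt (fun s : ℝ => (i.insertNth s y : Fin (n+1) → ℝ))
          (Pi.single i 1) t := by
        have h' := ((hasDerivAt_id t).smul_const (Pi.single i 1 : Fin (n+1) → ℝ)).const_add
          (i.insertNth 0 y : Fin (n+1) → ℝ)
        simp only [one_smul] at h'
        have h2 : (fun s : ℝ => (i.insertNth s y : Fin (n+1) → ℝ))
            = fun s => (i.insertNth 0 y : Fin (n+1) → ℝ) + id s • (Pi.single i 1 : Fin (n+1) → ℝ) := by
          funext s; exact insertNth_affine n i y s
        rw [h2]; exact h'
      exact (hf.differentiable one_ne_zero (i.insertNth t y)).hasFDerivAt.comp_hasDerivAt t hc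
    have hφc : ContDiff ℝ 1 (fun s => f (i.insertNth s y)) := by
      apply hf.comp
      have h2 : (fun s : ℝ => (i.insertNth s y : Fin (n+1) → ℝ))
          = fun s => (i.insertNth 0 y : Fin (n+1) → ℝ) + s • (Pi.single i 1 : Fin (n+1) → ℝ) := by
        funext s; exact insertNth_affine n i y s
      rw [h2]
      exact contDiff_const.add (contDiff_id.smul contDiff_const)
    have hφs : HasCompactSupport (fun s => f (i.insertNth s y)) := by
      apply HasCompactSupport.intro (h2f.image (continuous_apply i))
      intro t ht
      by_contra hne
      exact ht ⟨i.insertNth t y, subset_tsupport f (by simpa using hne),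
        by simp [Fin.insertNth_apply_same]⟩
    have heq : ∀ t : ℝ, g (e.symm (t, y)) = deriv (fun s => f (i.insertNth s y)) t := by
      intro t
      rw [(hφd t).deriv]
      simp [hedef, MeasurableEquiv.piFinSuccAbove_symm_apply, Fin.insertNthEquiv]
    simp only [heq]
    exact oneDim_integral_deriv _ hφc hφs
  simp only [key, integral_zero]

lemma eucl_integral_fderiv (d : ℕ) (hd : d ≠ 0) (f : EuclideanSpace ℝ (Fin d) → ℝ)
    (hf : ContDiff ℝ 1 f) (h2f : HasCompactSupport f) (v : EuclideanSpace ℝ (Fin d)) :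
    ∫ x, fderiv ℝ f x v = 0 := by
  obtain ⟨n, rfl⟩ := Nat.exists_eq_succ_of_ne_zero hd
  -- single version
  have hsingle : ∀ i : Fin (n+1), ∫ x, fderiv ℝ f x (EuclideanSpace.single i 1) = 0 := by
    intro i
    set L := EuclideanSpace.equiv (Fin (n+1)) ℝ with hL
    set g : (Fin (n+1) → ℝ) → ℝ := f ∘ L.symm with hgdef
    have hg : ContDiff ℝ 1 g := hf.comp L.symm.contDiff
    have h2g : HasCompactSupport g := h2f.comp_homeomorph L.symm.toHomeomorph
    have hpi := pi_integral_fderiv n g hg h2g i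
    have hmeq : MeasurePreserving ((MeasurableEquiv.toLp 2 (Fin (n+1) → ℝ)).symm) volume volume :=
      EuclideanSpace.volume_preserving_symm_measurableEquiv_toLp _
    have hint := hmeq.integral_comp ((MeasurableEquiv.toLp 2 (Fin (n+1) → ℝ)).symm).measurableEmbedding
      (fun y => fderiv ℝ g y (Pi.single i 1))
    rw [hpi] at hint
    rw [← hint]
    congr 1
    funext x
    have h1 : fderiv ℝ g (L x) = (fderiv ℝ f (L.symm (L x))).comp (L.symm : _ →L[ℝ] _) :=
      L.symm.comp_right_fderiv
    have h2 : ((MeasurableEquiv.toLp 2 (Fin (n+1) → ℝ)).symm) x = L x := rfl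
    rw [h2, h1]
    simp only [ContinuousLinearEquiv.symm_apply_apply, ContinuousLinearMap.coe_comp',
      Function.comp_apply, ContinuousLinearEquiv.coe_coe]
    rfl
  -- general v
  have hrepr : v = ∑ i, v i • EuclideanSpace.single i (1:ℝ) := by
    have := (EuclideanSpace.basisFun (Fin (n+1)) ℝ).sum_repr v
    simp only [EuclideanSpace.basisFun_repr, EuclideanSpace.basisFun_apply] at this
    exact this.symm
  have hintg : ∀ i : Fin (n+1), Integrable (fun x => fderiv ℝ f x (EuclideanSpace.single i 1)) := by
    intro i
    exact (((ContinuousLinearMap.apply ℝ ℝ (EuclideanSpace.single i (1:ℝ))).continuous).comp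
      (hf.continuous_fderiv one_ne_zero)).integrable_of_hasCompactSupport
      (h2f.fderiv_apply ℝ (EuclideanSpace.single i 1))
  calc ∫ x, fderiv ℝ f x v = ∫ x, ∑ i, v i * fderiv ℝ f x (EuclideanSpace.single i 1) := by
        congr 1; funext x
        conv_lhs => rw [hrepr]
        rw [map_sum]
        simp [smul_eq_mul]
    _ = ∑ i, ∫ x, v i * fderiv ℝ f x (EuclideanSpace.single i 1) :=
        integral_finset_sum _ (fun i _ => (hintg i).const_mul _)
    _ = 0 := by simp [integral_const_mul, hsingle]

lemma eucl_repr (d : ℕ) (v : EuclideanSpace ℝ (Fin d)) :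
    v = ∑ i, v i • EuclideanSpace.single i (1:ℝ) := by
  have := (EuclideanSpace.basisFun (Fin d) ℝ).sum_repr v
  simp only [EuclideanSpace.basisFun_repr, EuclideanSpace.basisFun_apply] at this
  exact this.symm

/-- **Hardy's inequality** on `ℝ^d`, `d ≥ 3`, for smooth compactly supported
functions whose support avoids the origin. -/
theorem hardy_inequality (d : ℕ) (hd : 3 ≤ d)
    (u : EuclideanSpace ℝ (Fin d) → ℝ)
    (hu : ContDiff ℝ (⊤ : ℕ∞) u) (hsupp : HasCompactSupport u)
    (h0 : (0 : EuclideanSpace ℝ (Fin d)) ∉ tsupport u) :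
    ∫ x, ‖fderiv ℝ u x‖ ^ 2 ≥
      ((d : ℝ) - 2) ^ 2 / 4 * ∫ x, (u x) ^ 2 / ‖x‖ ^ 2 := by
  classical
  have hu1 : ContDiff ℝ 1 u := hu.of_le (by simp)
  have hopen : IsOpen (tsupport u)ᶜ := (isClosed_tsupport u).isOpen_compl
  -- the vector field components
  set F : Fin d → EuclideanSpace ℝ (Fin d) → ℝ :=
    fun i x => u x ^ 2 * (‖x‖ ^ 2)⁻¹ * x i with hFdef
  have hFc : ∀ i, ContDiff ℝ 1 (F i) := by
    intro i
    rw [contDiff_iff_contDiffAt]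
    intro x
    by_cases hx : x ∈ tsupport u
    · have hx0 : x ≠ 0 := fun h => h0 (h ▸ hx)
      have h1 : ContDiffAt ℝ 1 (fun y => u y ^ 2) x := (hu1.pow 2).contDiffAt
      have h2 : ContDiffAt ℝ 1
          (fun y : EuclideanSpace ℝ (Fin d) => (‖y‖ ^ 2)⁻¹) x := by
        apply ContDiffAt.inv
        · exact (contDiff_norm_sq ℝ).contDiffAt
        · exact pow_ne_zero _ (norm_ne_zero_iff.2 hx0)
      have h3 : ContDiffAt ℝ 1 (fun y : EuclideanSpace ℝ (Fin d) => y i) x :=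
        (EuclideanSpace.proj (𝕜 := ℝ) i).contDiff.contDiffAt
      exact (h1.mul h2).mul h3
    · have hev : F i =ᶠ[nhds x] (fun _ => (0:ℝ)) := by
        filter_upwards [hopen.mem_nhds hx] with y hy
        simp [hFdef, image_eq_zero_of_notMem_tsupport hy]
      exact (contDiffAt_const (c := (0:ℝ))).congr_of_eventuallyEq hev
  have hFs : ∀ i, HasCompactSupport (F i) := by
    intro i
    apply hsupp.mono'
    intro x hx
    apply subset_tsupport u
    intro hux
    exact hx (by simp [hFdef, hux])
  -- pointwise divergence identity
  have hdivpt : ∀ x, (∑ i, fderiv ℝ (F i) x (EuclideanSpace.single i 1))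
      = 2 * u x * fderiv ℝ u x x * (‖x‖ ^ 2)⁻¹
        + ((d:ℝ) - 2) * u x ^ 2 * (‖x‖ ^ 2)⁻¹ := by
    intro x
    by_cases hx : x ∈ tsupport u
    · have hx0 : x ≠ 0 := fun h => h0 (h ▸ hx)
      have hB : (0:ℝ) < ‖x‖ ^ 2 := pow_pos (norm_pos_iff.2 hx0) 2
      have hBne : ‖x‖ ^ 2 ≠ 0 := hB.ne'
      have hDu := (hu1.differentiable one_ne_zero x).hasFDerivAt
      have hU2 : HasFDerivAt (fun y => u y ^ 2)
          (u x • fderiv ℝ u x + u x • fderiv ℝ u x) x := by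
        have hDD := hDu.mul hDu; simp only [pow_two]; exact hDD
      have hBsq : HasFDerivAt (fun y : EuclideanSpace ℝ (Fin d) => ‖y‖ ^ 2)
          (2 • (innerSL ℝ x)) x := (hasStrictFDerivAt_norm_sq x).hasFDerivAt
      have hBinv : HasFDerivAt (fun y : EuclideanSpace ℝ (Fin d) => (‖y‖ ^ 2)⁻¹)
          ((-(ContinuousLinearMap.mulLeftRight ℝ ℝ (‖x‖^2)⁻¹ (‖x‖^2)⁻¹)).comp
            (2 • (innerSL ℝ x))) x := (hasFDerivAt_inv' hBne).comp x hBsq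
      have hm := hU2.mul hBinv
      have hFi : ∀ i, HasFDerivAt (F i)
          (((u x ^ 2) * (‖x‖ ^ 2)⁻¹) • (EuclideanSpace.proj (𝕜 := ℝ) i)
            + (x i) • ((u x ^ 2) • ((-(ContinuousLinearMap.mulLeftRight ℝ ℝ (‖x‖^2)⁻¹ (‖x‖^2)⁻¹)).comp
            (2 • (innerSL ℝ x)))
              + (‖x‖ ^ 2)⁻¹ • (u x • fderiv ℝ u x + u x • fderiv ℝ u x))) x :=
        fun i => hm.mul ((EuclideanSpace.proj (𝕜 := ℝ) i).hasFDerivAt)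
      have key : ∀ i, fderiv ℝ (F i) x (EuclideanSpace.single i 1)
          = u x ^ 2 * (‖x‖ ^ 2)⁻¹
            + (-(2 * (u x ^ 2) * ((‖x‖ ^ 2)⁻¹ * (‖x‖ ^ 2)⁻¹))) * (x i * x i)
            + (2 * u x * (‖x‖ ^ 2)⁻¹) * (x i * fderiv ℝ u x (EuclideanSpace.single i 1)) := by
        intro i
        rw [(hFi i).fderiv]
        simp only [ContinuousLinearMap.add_apply, ContinuousLinearMap.smul_apply,
          ContinuousLinearMap.comp_apply, ContinuousLinearMap.neg_apply,
          ContinuousLinearMap.mulLeftRight_apply, innerSL_apply_apply,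
          smul_eq_mul, ContinuousLinearMap.smul_apply]
        have hin : (inner ℝ x (EuclideanSpace.single i (1:ℝ)) : ℝ) = x i := by
          rw [EuclideanSpace.inner_single_right]; simp
        have hsa : (EuclideanSpace.single i (1:ℝ)) i = 1 := by
          simp [EuclideanSpace.single_apply]
        have hpr : (EuclideanSpace.proj (𝕜 := ℝ) i) (EuclideanSpace.single i (1:ℝ)) = 1 := by
          simpa using hsa
        rw [hpr, hin, nsmul_eq_mul]
        push_cast
        ring
      rw [Finset.sum_congr rfl (fun i _ => key i)]
      rw [Finset.sum_add_distrib, Finset.sum_add_distrib, Finset.sum_const,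
        ← Finset.mul_sum, ← Finset.mul_sum]
      have hsum1 : ∑ i, x i * fderiv ℝ u x (EuclideanSpace.single i 1) = fderiv ℝ u x x := by
        set L := fderiv ℝ u x with hL
        conv_rhs => rw [eucl_repr d x]
        rw [map_sum]
        simp [smul_eq_mul]
      have hsum2 : ∑ i, x i * x i = ‖x‖ ^ 2 := by
        rw [EuclideanSpace.norm_eq, Real.sq_sqrt (by positivity)]
        exact Finset.sum_congr rfl fun i _ => by
          simp [Real.norm_eq_abs, sq, abs_mul_abs_self]
      rw [hsum1, hsum2]
      simp only [Finset.card_univ, Fintype.card_fin, nsmul_eq_mul]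
      field_simp
      ring
    · have hu0 : u x = 0 := image_eq_zero_of_notMem_tsupport hx
      have hFd : ∀ i, fderiv ℝ (F i) x = 0 := by
        intro i
        have hev : F i =ᶠ[nhds x] (fun _ => (0:ℝ)) := by
          filter_upwards [hopen.mem_nhds hx] with y hy
          simp [hFdef, image_eq_zero_of_notMem_tsupport hy]
        rw [hev.fderiv_eq]
        exact fderiv_const_apply 0
      simp [hFd, hu0]
  -- integrability
  have hnz : ∀ᶠ y in nhds (0 : EuclideanSpace ℝ (Fin d)), u y = 0 := by
    filter_upwards [hopen.mem_nhds h0] with y hy using image_eq_zero_of_notMem_tsupport hy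
  have hdercont : Continuous fun x => fderiv ℝ u x := hu1.continuous_fderiv one_ne_zero
  set m : EuclideanSpace ℝ (Fin d) → ℝ :=
    fun x => u x * fderiv ℝ u x x * (‖x‖ ^ 2)⁻¹ with hmdef
  set w : EuclideanSpace ℝ (Fin d) → ℝ := fun x => u x ^ 2 * (‖x‖ ^ 2)⁻¹ with hwdef
  set q : EuclideanSpace ℝ (Fin d) → ℝ := fun x => ‖fderiv ℝ u x‖ ^ 2 with hqdef
  have hcont2 : ∀ g : EuclideanSpace ℝ (Fin d) → ℝ, Continuous g →
      (∀ x, u x = 0 → g x = 0) →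
      Continuous fun x => g x * (‖x‖ ^ 2)⁻¹ := by
    intro g hg hg0
    rw [continuous_iff_continuousAt]
    intro x
    by_cases hx : x = 0
    · subst hx
      have hev : (fun x => g x * (‖x‖ ^ 2)⁻¹) =ᶠ[nhds (0:EuclideanSpace ℝ (Fin d))]
          (fun _ => (0:ℝ)) := by
        filter_upwards [hnz] with y hy
        simp [hg0 y hy]
      exact ContinuousAt.congr continuousAt_const hev.symm
    · exact hg.continuousAt.mul
        (((continuous_norm.pow 2).continuousAt).inv₀ (pow_ne_zero _ (norm_ne_zero_iff.2 hx)))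
  have hmc : Continuous m :=
    hcont2 _ (hu.continuous.mul (hdercont.clm_apply continuous_id))
      (fun x hx => by simp [hx])
  have hwc : Continuous w :=
    hcont2 _ (hu.continuous.pow 2) (fun x hx => by simp [hx])
  have hqc : Continuous q := by fun_prop
  have hMint : Integrable m := hmc.integrable_of_hasCompactSupport
    (hsupp.mono' fun x hx => subset_tsupport u fun hux => hx (by simp [hmdef, hux]))
  have hWint : Integrable w := hwc.integrable_of_hasCompactSupport
    (hsupp.mono' fun x hx => subset_tsupport u fun hux => hx (by simp [hwdef, hux]))
  have hQint : Integrable q := hqc.integrable_of_hasCompactSupport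
    ((hsupp.fderiv ℝ).mono' fun x hx => subset_tsupport _ fun hux => hx (by simp [hqdef, hux]))
  have hdint : ∀ i, Integrable (fun x => fderiv ℝ (F i) x (EuclideanSpace.single i 1)) :=
    fun i => (((ContinuousLinearMap.apply ℝ ℝ (EuclideanSpace.single i (1:ℝ))).continuous).comp
      ((hFc i).continuous_fderiv one_ne_zero)).integrable_of_hasCompactSupport
      ((hFs i).fderiv_apply ℝ _)
  -- the divergence theorem step
  have hdiv0 : ∫ x, (2 * m x + ((d:ℝ) - 2) * w x) = 0 := by
    have h1 : ∫ x, (∑ i, fderiv ℝ (F i) x (EuclideanSpace.single i 1)) = 0 := by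
      rw [integral_finset_sum _ (fun i _ => hdint i)]
      exact Finset.sum_eq_zero fun i _ =>
        eucl_integral_fderiv d (by omega) (F i) (hFc i) (hFs i) _
    rw [← h1]
    congr 1
    funext x
    rw [hdivpt x]
    simp only [hmdef, hwdef]
    ring
  set M := ∫ x, m x with hM
  set W := ∫ x, w x with hW
  set Q := ∫ x, q x with hQ
  have hMW : 2 * M + ((d:ℝ) - 2) * W = 0 := by
    rw [integral_add (hMint.const_mul 2) (hWint.const_mul _), integral_const_mul,
      integral_const_mul] at hdiv0
    exact hdiv0
  have hD2 : (1:ℝ) ≤ (d:ℝ) - 2 := by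
    have : (3:ℝ) ≤ (d:ℝ) := by exact_mod_cast hd
    linarith
  set k : ℝ := ((d:ℝ) - 2) / 2 with hk
  have hkpos : (0:ℝ) < k := by rw [hk]; linarith
  have hpt : ∀ x, -2 * m x ≤ k * w x + k⁻¹ * q x := by
    intro x
    by_cases hux : u x = 0
    · have h1 : m x = 0 := by simp [hmdef, hux]
      have h2 : w x = 0 := by simp [hwdef, hux]
      have h3 : 0 ≤ q x := by simp only [hqdef]; positivity
      rw [h1, h2]
      nlinarith [inv_pos.2 hkpos]
    · have hx0 : x ≠ 0 := by
        rintro rfl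
        exact hux (image_eq_zero_of_notMem_tsupport h0)
      have hr : (0:ℝ) < ‖x‖ := norm_pos_iff.2 hx0
      set s : ℝ := |u x| / ‖x‖ with hs
      set t : ℝ := ‖fderiv ℝ u x‖ with ht
      have htn : 0 ≤ t := norm_nonneg _
      have h1 : -2 * m x ≤ 2 * (s * t) := by
        have hop : |fderiv ℝ u x x| ≤ t * ‖x‖ := (fderiv ℝ u x).le_opNorm x
        have habs : |m x| ≤ s * t := by
          have : |m x| = |u x| * |fderiv ℝ u x x| * (‖x‖ ^ 2)⁻¹ := by
            rw [hmdef]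
            rw [abs_mul, abs_mul, abs_inv, abs_pow, abs_norm]
          rw [this, hs]
          rw [div_mul_eq_mul_div, le_div_iff₀ hr]
          have h2' : (‖x‖ ^ 2)⁻¹ * ‖x‖ ^ 2 = 1 := inv_mul_cancel₀ (by positivity)
          calc |u x| * |fderiv ℝ u x x| * (‖x‖ ^ 2)⁻¹ * ‖x‖
              ≤ |u x| * (t * ‖x‖) * (‖x‖ ^ 2)⁻¹ * ‖x‖ := by gcongr
            _ = |u x| * t * ((‖x‖ ^ 2)⁻¹ * ‖x‖ ^ 2) := by ring
            _ = |u x| * t := by rw [h2']; ring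
        nlinarith [neg_abs_le (m x), habs]
      have h2 : 2 * (s * t) ≤ k * s ^ 2 + k⁻¹ * t ^ 2 := by
        have hkk : k * k⁻¹ = 1 := mul_inv_cancel₀ hkpos.ne'
        have hiden : k * s ^ 2 + k⁻¹ * t ^ 2 - 2 * (s * t) = (k * s - t) ^ 2 * k⁻¹ := by
          linear_combination (2 * s * t - k * s ^ 2) * hkk
        linarith [mul_nonneg (sq_nonneg (k * s - t)) (inv_nonneg.2 hkpos.le)]
      have h3 : s ^ 2 = w x := by
        rw [hs, div_pow, sq_abs, hwdef, div_eq_mul_inv]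
      have h4 : t ^ 2 = q x := rfl
      rw [← h3, ← h4]
      linarith
  have hineq : ∫ x, (-2) * m x ≤ ∫ x, (k * w x + k⁻¹ * q x) :=
    integral_mono (hMint.const_mul _) ((hWint.const_mul k).add (hQint.const_mul k⁻¹))
      (fun x => by simpa using hpt x)
  rw [integral_const_mul, integral_add (hWint.const_mul k) (hQint.const_mul _),
    integral_const_mul, integral_const_mul] at hineq
  have hgoal2 : (fun x : EuclideanSpace ℝ (Fin d) => u x ^ 2 / ‖x‖ ^ 2) = w := by
    funext x
    rw [hwdef, div_eq_mul_inv]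
  show (∫ x, q x) ≥ ((d:ℝ) - 2) ^ 2 / 4 * ∫ x, u x ^ 2 / ‖x‖ ^ 2
  rw [hgoal2]
  have h5 : ((d:ℝ) - 2) * W ≤ k * W + k⁻¹ * Q := by
    have : -2 * M = ((d:ℝ) - 2) * W := by linarith
    linarith [hineq]
  have h6 : k * W ≤ k⁻¹ * Q := by
    have h2k : (d:ℝ) - 2 = 2 * k := by rw [hk]; ring
    rw [h2k] at h5
    linarith
  have h7 : k * (k * W) ≤ k * (k⁻¹ * Q) := mul_le_mul_of_nonneg_left h6 hkpos.le
  have h8 : k * (k⁻¹ * Q) = Q := by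
    field_simp
  rw [show ((d:ℝ) - 2) ^ 2 / 4 = k * k by rw [hk]; ring]
  rw [ge_iff_le, ← hW, ← hQ]
  calc k * k * W = k * (k * W) := by ring
    _ ≤ k * (k⁻¹ * Q) := h7
    _ = Q := h8
end

section
/- Let Ω ⊆ ℝ^n be open, f : Ω → (0,∞) twice differentiable, α ∈ ℝ, and u ∈ C_c^∞(Ω). Then ∫_Ω |∇u|² = ∫_Ω [α(1-α)|∇f|²/f² + α(-Δf)/f] |u|² + ∫_Ω |∇(f^{-α}u)|² f^{2α}. -/
open MeasureTheory
open scoped Manifold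

/-- The Euclidean Laplacian, written as the sum of pure second partial
derivatives. -/
noncomputable def laplacian {n : ℕ} (f : EuclideanSpace ℝ (Fin n) → ℝ)
    (x : EuclideanSpace ℝ (Fin n)) : ℝ :=
  ∑ i : Fin n,
    fderiv ℝ (fun y => fderiv ℝ f y (EuclideanSpace.single i 1)) x
      (EuclideanSpace.single i 1)

lemma norm_sq_clm {n : ℕ} (L : EuclideanSpace ℝ (Fin n) →L[ℝ] ℝ) :
    ‖L‖ ^ 2 = ∑ i : Fin n, (L (EuclideanSpace.single i 1)) ^ 2 := by
  set y := (InnerProductSpace.toDual ℝ (EuclideanSpace ℝ (Fin n))).symm L with hy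
  have hLy : L = InnerProductSpace.toDual ℝ _ y := by simp [hy]
  have h1 : ‖L‖ = ‖y‖ := by rw [hLy]; simp
  have h2 : ∀ i, L (EuclideanSpace.single i 1) = y i := by
    intro i
    rw [hLy]
    simp [InnerProductSpace.toDual_apply_apply, EuclideanSpace.inner_single_right]
  rw [h1]
  simp_rw [h2]
  have := EuclideanSpace.norm_eq y
  rw [this, Real.sq_sqrt (by positivity)]
  congr 1; ext i; rw [Real.norm_eq_abs, sq_abs]

section Global

variable {n : ℕ}

local notation "E" => EuclideanSpace ℝ (Fin n)

lemma gsr_global (F : EuclideanSpace ℝ (Fin n) → ℝ)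
    (hF : ContDiff ℝ 2 F) (hFpos : ∀ x, 0 < F x) (α : ℝ)
    (u : EuclideanSpace ℝ (Fin n) → ℝ)
    (hu : ContDiff ℝ (⊤ : ℕ∞) u) (husupp : HasCompactSupport u) :
    ∫ x, ‖fderiv ℝ u x‖ ^ 2 =
      (∫ x, (α * (1 - α) * ‖fderiv ℝ F x‖ ^ 2 / (F x) ^ 2
          + α * (-(laplacian F x)) / F x) * (u x) ^ 2)
      + ∫ x, ‖fderiv ℝ (fun y => (F y) ^ (-α) * u y) x‖ ^ 2 * (F x) ^ (2 * α) := by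
  have hFd : Differentiable ℝ F := hF.differentiable two_ne_zero
  have hud : Differentiable ℝ u := hu.differentiable (by simp)
  set e : Fin n → E := fun i => EuclideanSpace.single i 1 with he
  set a : Fin n → E → ℝ := fun i x => fderiv ℝ u x (e i) with ha
  set b : Fin n → E → ℝ := fun i x => fderiv ℝ F x (e i) with hb
  set Lp : Fin n → E → ℝ := fun i x => fderiv ℝ (b i) x (e i) with hLp
  -- regularity of b
  have hb1 : ∀ i, ContDiff ℝ 1 (b i) := by
    intro i
    have : ContDiff ℝ 1 (fun x : E => fderiv ℝ F x) := hF.fderiv_right (m := 1) (by norm_num)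
    exact (ContinuousLinearMap.apply ℝ ℝ (e i)).contDiff.comp this
  have hbc : ∀ i, Continuous (b i) := fun i => (hb1 i).continuous
  have hac : ∀ i, Continuous (a i) := by
    intro i
    have : Continuous (fun x : E => fderiv ℝ u x) := hu.continuous_fderiv (by simp)
    exact (this.clm_apply continuous_const)
  have hLpc : ∀ i, Continuous (Lp i) := by
    intro i
    have : Continuous (fun x : E => fderiv ℝ (b i) x) := (hb1 i).continuous_fderiv one_ne_zero
    exact this.clm_apply continuous_const
  have hFc : Continuous F := hF.continuous
  have hFne : ∀ x, F x ≠ 0 := fun x => (hFpos x).ne'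
  have hFinvc : Continuous (fun x => (F x)⁻¹) := hFc.inv₀ hFne
  -- compact supports
  have hsupp_a : ∀ i, HasCompactSupport (a i) := by
    intro i
    have h0 : ((fun L : E →L[ℝ] ℝ => L (e i)) 0) = 0 := rfl
    exact (husupp.fderiv (𝕜 := ℝ)).comp_left (g := fun L : E →L[ℝ] ℝ => L (e i)) h0
  have hsupp_u2 : HasCompactSupport (fun x => u x * u x) := husupp.mul_left
  have hsupp_ua : ∀ i, HasCompactSupport (fun x => u x * a i x) := fun i => (hsupp_a i).mul_left
  -- generic integrability helper
  have intg : ∀ (φ ψ : E → ℝ), Continuous φ → Continuous ψ → HasCompactSupport ψ →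
      Integrable (fun x => φ x * ψ x) := by
    intro φ ψ hφ hψ hsupp
    exact (hφ.mul hψ).integrable_of_hasCompactSupport hsupp.mul_left
  -- the integration by parts, for each coordinate
  have P : ∀ i, ∫ x, (2 * (F x)⁻¹ * b i x) * (u x * a i x)
      = ∫ x, (((F x) ^ 2)⁻¹ * (b i x) ^ 2 - (F x)⁻¹ * Lp i x) * (u x * u x) := by
    intro i
    set c : E → ℝ := fun x => (F x)⁻¹ * b i x with hc
    set g : E → ℝ := fun x => u x * u x with hg
    have hcCD : ContDiff ℝ 1 c := ((hF.of_le one_le_two).inv hFne).mul (hb1 i)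
    have hgCD : ContDiff ℝ (⊤ : ℕ∞) g := hu.mul hu
    have hg' : ∀ x, fderiv ℝ g x = (2 * u x) • fderiv ℝ u x := by
      intro x
      have h : fderiv ℝ (fun y => u y * u y) x = _ := ((hud x).hasFDerivAt.mul (hud x).hasFDerivAt).fderiv
      rw [hg, h, two_mul, add_smul]
    have hc' : ∀ x, fderiv ℝ c x (e i)
        = -(((F x) ^ 2)⁻¹ * (b i x) ^ 2) + (F x)⁻¹ * Lp i x := by
      intro x
      have h1 : HasFDerivAt (fun y => (F y)⁻¹)
          ((ContinuousLinearMap.smulRight (1 : ℝ →L[ℝ] ℝ) (-(F x ^ 2)⁻¹)).comp (fderiv ℝ F x)) x :=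
        (hasFDerivAt_inv (hFne x)).comp x (hFd x).hasFDerivAt
      have h2 : HasFDerivAt (b i) (fderiv ℝ (b i) x) x :=
        ((hb1 i).differentiable one_ne_zero x).hasFDerivAt
      have h : fderiv ℝ (fun y => (F y)⁻¹ * b i y) x = _ := (h1.mul h2).fderiv
      rw [hc]
      rw [h]
      have e1 : (fderiv ℝ (b i) x) (e i) = Lp i x := rfl
      have e2 : (fderiv ℝ F x) (e i) = b i x := rfl
      simp only [ContinuousLinearMap.add_apply, ContinuousLinearMap.smul_apply,
        ContinuousLinearMap.comp_apply, ContinuousLinearMap.smulRight_apply,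
        ContinuousLinearMap.one_apply, smul_eq_mul, e1, e2]
      ring
    have I1 : Integrable (fun x => fderiv ℝ c x (e i) * g x) := by
      apply intg _ _ ?_ (hu.continuous.mul hu.continuous) hsupp_u2
      exact ((hcCD.continuous_fderiv one_ne_zero).clm_apply continuous_const)
    have I2 : Integrable (fun x => c x * fderiv ℝ g x (e i)) := by
      have hcont : Continuous (fun x => fderiv ℝ g x (e i)) :=
        ((hgCD.continuous_fderiv (by simp)).clm_apply continuous_const)
      have hsupp : HasCompactSupport (fun x => fderiv ℝ g x (e i)) := by
        have h0 : ((fun L : E →L[ℝ] ℝ => L (e i)) 0) = 0 := rfl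
        exact (hsupp_u2.fderiv (𝕜 := ℝ)).comp_left (g := fun L : E →L[ℝ] ℝ => L (e i)) h0
      exact intg _ _ (hFinvc.mul (hbc i)) hcont hsupp
    have I3 : Integrable (fun x => c x * g x) :=
      intg _ _ (hFinvc.mul (hbc i)) (hu.continuous.mul hu.continuous) hsupp_u2
    have key : ∫ x, c x * fderiv ℝ g x (e i) = - ∫ x, fderiv ℝ c x (e i) * g x :=
      integral_mul_fderiv_eq_neg_fderiv_mul_of_integrable I1 I2 I3
        (fun x _ => hcCD.differentiable one_ne_zero x) (fun x _ => hgCD.differentiable (by simp) x)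
    rw [← integral_neg] at key
    calc ∫ x, (2 * (F x)⁻¹ * b i x) * (u x * a i x)
        = ∫ x, c x * fderiv ℝ g x (e i) := by
          congr 1; funext x
          rw [hg' x]
          simp only [ContinuousLinearMap.smul_apply, smul_eq_mul, hc, ← ha]
          ring
      _ = ∫ x, -(fderiv ℝ c x (e i) * g x) := key
      _ = ∫ x, (((F x) ^ 2)⁻¹ * (b i x) ^ 2 - (F x)⁻¹ * Lp i x) * (u x * u x) := by
          congr 1; funext x
          rw [hc' x, hg]
          ring
  -- named combinations
  set C : E → ℝ := fun x => ∑ i, (2 * (F x)⁻¹ * b i x) * (u x * a i x) with hCdef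
  set D : E → ℝ := fun x => ∑ i, (((F x) ^ 2)⁻¹ * (b i x) ^ 2 - (F x)⁻¹ * Lp i x) * (u x * u x)
    with hDdef
  set T1 : E → ℝ := fun x => ∑ i, (a i x) ^ 2 with hT1def
  set T3 : E → ℝ := fun x => ∑ i, (a i x - α * u x * b i x / F x) ^ 2 with hT3def
  set T2 : E → ℝ := fun x =>
    (α * (1 - α) * (∑ i, (b i x) ^ 2) / (F x) ^ 2 + α * (-(∑ i, Lp i x)) / F x) * (u x) ^ 2
    with hT2def
  have hu2' : HasCompactSupport (fun x => (u x) ^ 2) := by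
    have h0 : ((fun t : ℝ => t ^ 2) 0) = 0 := by norm_num
    exact husupp.comp_left (g := fun t : ℝ => t ^ 2) h0
  have hintC : ∀ i, Integrable (fun x => (2 * (F x)⁻¹ * b i x) * (u x * a i x)) := fun i =>
    intg _ _ ((continuous_const.mul hFinvc).mul (hbc i)) (hu.continuous.mul (hac i)) (hsupp_ua i)
  have hintD : ∀ i, Integrable
      (fun x => (((F x) ^ 2)⁻¹ * (b i x) ^ 2 - (F x)⁻¹ * Lp i x) * (u x * u x)) := fun i =>
    intg _ _ ((((hFc.pow 2).inv₀ fun x => pow_ne_zero 2 (hFne x)).mul ((hbc i).pow 2)).sub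
      (hFinvc.mul (hLpc i))) (hu.continuous.mul hu.continuous) hsupp_u2
  have hCD : ∫ x, C x = ∫ x, D x := by
    rw [hCdef, hDdef, integral_finset_sum _ fun i _ => hintC i,
      integral_finset_sum _ fun i _ => hintD i]
    exact Finset.sum_congr rfl fun i _ => P i
  have hCint : Integrable C := integrable_finset_sum _ fun i _ => hintC i
  have hDint : Integrable D := integrable_finset_sum _ fun i _ => hintD i
  have hT1int : Integrable T1 := by
    apply integrable_finset_sum _ fun i _ => ?_
    simpa [pow_two] using intg _ _ (hac i) (hac i) (hsupp_a i)
  have hT3int : Integrable T3 := by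
    apply integrable_finset_sum _ fun i _ => ?_
    have hw : Continuous (fun x => a i x - α * u x * b i x / F x) :=
      (hac i).sub (((continuous_const.mul hu.continuous).mul (hbc i)).div hFc hFne)
    have hws : HasCompactSupport (fun x => a i x - α * u x * b i x / F x) := by
      apply husupp.mono'
      intro x hx
      by_contra hxt
      apply hx
      have hu0 : u x = 0 := image_eq_zero_of_notMem_tsupport hxt
      have ha0 : a i x = 0 := by
        have : fderiv ℝ u x = 0 := (HasFDerivAt.of_notMem_tsupport ℝ hxt).fderiv
        simp [ha, this]
      simp [ha0, hu0]
    have h0 : ((fun t : ℝ => t ^ 2) 0) = 0 := by norm_num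
    have hws2 : HasCompactSupport (fun x => (a i x - α * u x * b i x / F x) ^ 2) :=
      hws.comp_left (g := fun t : ℝ => t ^ 2) h0
    exact (hw.pow 2).integrable_of_hasCompactSupport hws2
  have hT2int : Integrable T2 := by
    apply intg _ _ ?_ (hu.continuous.pow 2) hu2'
    apply Continuous.add
    · exact (continuous_const.mul (continuous_finset_sum _ fun i _ => (hbc i).pow 2)).div
        (hFc.pow 2) fun x => pow_ne_zero 2 (hFne x)
    · exact (continuous_const.mul ((continuous_finset_sum _ fun i _ => hLpc i).neg)).div
        hFc hFne
  -- pointwise identity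
  have hptw : ∀ x, T1 x = T2 x + T3 x + α * C x - α * D x := by
    intro x
    have h2 : T2 x = ∑ i,
        ((α * (1 - α) * (b i x) ^ 2 / (F x) ^ 2 + α * (-(Lp i x)) / F x) * (u x) ^ 2) := by
      simp only [hT2def]
      rw [← Finset.sum_mul, Finset.sum_add_distrib, ← Finset.sum_div, ← Finset.mul_sum,
        ← Finset.sum_div, ← Finset.mul_sum, Finset.sum_neg_distrib]
    rw [h2, hT1def, hT3def, hCdef, hDdef, Finset.mul_sum, Finset.mul_sum,
      ← Finset.sum_add_distrib, ← Finset.sum_add_distrib, ← Finset.sum_sub_distrib]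
    refine Finset.sum_congr rfl fun i _ => ?_
    field_simp
    ring
  have hmain : ∫ x, T1 x = (∫ x, T2 x) + ∫ x, T3 x := by
    calc ∫ x, T1 x = ∫ x, (T2 x + T3 x + α * C x - α * D x) :=
          integral_congr_ae (Filter.Eventually.of_forall fun x => hptw x)
      _ = ((∫ x, T2 x) + ∫ x, T3 x) + (α * ∫ x, C x) - (α * ∫ x, D x) := by
          have i1 : Integrable (fun x => α * C x) volume := hCint.const_mul α
          have i2 : Integrable (fun x => α * D x) volume := hDint.const_mul α
          have i3 : Integrable (fun x => T2 x + T3 x) volume := hT2int.add hT3int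
          have i4 : Integrable (fun x => T2 x + T3 x + α * C x) volume := i3.add i1
          rw [integral_sub i4 i2, integral_add i3 i1, integral_add hT2int hT3int,
            integral_const_mul, integral_const_mul]
      _ = (∫ x, T2 x) + ∫ x, T3 x := by rw [hCD]; ring
  -- identify the three integrands
  have g1 : (fun x : E => ‖fderiv ℝ u x‖ ^ 2) = T1 := by
    funext x
    rw [norm_sq_clm]
    try rfl
  have g2 : (fun x : E => (α * (1 - α) * ‖fderiv ℝ F x‖ ^ 2 / (F x) ^ 2
      + α * (-(laplacian F x)) / F x) * (u x) ^ 2) = T2 := by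
    funext x
    rw [norm_sq_clm]
    try rfl
  have g3 : (fun x : E => ‖fderiv ℝ (fun y => (F y) ^ (-α) * u y) x‖ ^ 2 * (F x) ^ (2 * α))
      = T3 := by
    funext x
    have hdF : HasFDerivAt (fun y => (F y) ^ (-α)) ((-α * (F x) ^ (-α - 1)) • fderiv ℝ F x) x :=
      (hFd x).hasFDerivAt.rpow_const (Or.inl (hFne x))
    have hd : HasFDerivAt (fun y => (F y) ^ (-α) * u y)
        ((F x) ^ (-α) • fderiv ℝ u x + u x • ((-α * (F x) ^ (-α - 1)) • fderiv ℝ F x)) x :=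
      hdF.mul (hud x).hasFDerivAt
    rw [hd.fderiv, norm_sq_clm, Finset.sum_mul]
    refine Finset.sum_congr rfl fun i _ => ?_
    simp only [ContinuousLinearMap.add_apply, ContinuousLinearMap.smul_apply, smul_eq_mul]
    have e2 : fderiv ℝ F x (EuclideanSpace.single i 1) = b i x := rfl
    have e3 : fderiv ℝ u x (EuclideanSpace.single i 1) = a i x := rfl
    rw [e2, e3]
    have hBpos : 0 < (F x) ^ α := Real.rpow_pos_of_pos (hFpos x) α
    have h1 : (F x) ^ (-α) = ((F x) ^ α)⁻¹ := Real.rpow_neg (hFpos x).le α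
    have hs : (F x) ^ (-α - 1) = (F x) ^ (-α) / F x := Real.rpow_sub_one (hFne x) (-α)
    have h3 : (F x) ^ (2 * α) = ((F x) ^ α) ^ 2 := by
      rw [mul_comm, Real.rpow_mul (hFpos x).le]
      norm_num [Real.rpow_natCast ((F x) ^ α) 2]
    rw [hs, h1, h3]
    have hw : ((F x) ^ α)⁻¹ * a i x + u x * (-α * (((F x) ^ α)⁻¹ / F x) * b i x)
        = ((F x) ^ α)⁻¹ * (a i x - α * u x * b i x / F x) := by ring
    rw [hw, mul_pow, mul_right_comm, ← mul_pow, inv_mul_cancel₀ hBpos.ne', one_pow, one_mul]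
  rw [g1, g2, g3]
  exact hmain

end Global

/-- **Ground state representation (GSR)**: for `Ω ⊆ ℝ^n` open, `f : Ω → (0,∞)`
twice differentiable, `α ∈ ℝ`, and `u ∈ C_c^∞(Ω)`,
`∫_Ω |∇u|² = ∫_Ω [α(1-α)|∇f|²/f² + α(-Δf)/f]|u|² + ∫_Ω |∇(f^{-α}u)|² f^{2α}`,
where `v = f^{-α} u`. -/
theorem ground_state_representation
    (n : ℕ) (Ω : Set (EuclideanSpace ℝ (Fin n))) (hΩ : IsOpen Ω)
    (f : EuclideanSpace ℝ (Fin n) → ℝ)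
    (hf : ContDiffOn ℝ 2 f Ω) (hfpos : ∀ x ∈ Ω, 0 < f x)
    (α : ℝ)
    (u : EuclideanSpace ℝ (Fin n) → ℝ)
    (hu : ContDiff ℝ (⊤ : ℕ∞) u) (husupp : HasCompactSupport u)
    (huΩ : tsupport u ⊆ Ω) :
    ∫ x in Ω, ‖fderiv ℝ u x‖ ^ 2 =
      (∫ x in Ω,
        (α * (1 - α) * ‖fderiv ℝ f x‖ ^ 2 / (f x) ^ 2
          + α * (-(laplacian f x)) / f x) * (u x) ^ 2)
      + ∫ x in Ω, ‖fderiv ℝ (fun y => (f y) ^ (-α) * u y) x‖ ^ 2 * (f x) ^ (2 * α) := by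
  classical
  have hKc : IsCompact (tsupport u) := husupp
  obtain ⟨L, hLc, hKL, hLΩ⟩ := exists_compact_between hKc hΩ huΩ
  obtain ⟨χ₀, hχ1, hχ0, hχ01⟩ :=
    exists_contMDiffMap_one_nhds_of_subset_interior (𝓘(ℝ, EuclideanSpace ℝ (Fin n))) (n := 2)
      (isClosed_tsupport u) hKL
  have hχsm : ContDiff ℝ 2 ⇑χ₀ := (contMDiff_iff_contDiff.mp χ₀.contMDiff).of_le (by norm_cast)
  have htsχ : tsupport ⇑χ₀ ⊆ L := by
    apply closure_minimal ?_ hLc.isClosed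
    intro x hx
    by_contra hxL
    exact hx (hχ0 x hxL)
  obtain ⟨V, hVo, hKV, hV1⟩ := mem_nhdsSet_iff_exists.mp hχ1
  set F : EuclideanSpace ℝ (Fin n) → ℝ := fun x => 1 + χ₀ x * (f x - 1) with hFdef
  have hFeqf : ∀ x ∈ V, F x = f x := by
    intro x hx
    have h1 : χ₀ x = 1 := hV1 hx
    simp [hFdef, h1]
  have hFsm : ContDiff ℝ 2 F := by
    rw [contDiff_iff_contDiffAt]
    intro x
    by_cases hx : x ∈ Ω
    · have h1 : ContDiffAt ℝ 2 f x := (hf.contDiffAt (hΩ.mem_nhds hx))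
      exact contDiffAt_const.add
        ((hχsm.contDiffAt).mul (h1.sub contDiffAt_const))
    · have hxs : x ∉ tsupport ⇑χ₀ := fun h => hx (hLΩ (htsχ h))
      have hev : ⇑χ₀ =ᶠ[nhds x] 0 := notMem_tsupport_iff_eventuallyEq.mp hxs
      have hev' : F =ᶠ[nhds x] (fun _ => (1 : ℝ)) := by
        filter_upwards [hev] with y hy
        simp [hFdef, hy]
      exact (contDiffAt_const (c := (1:ℝ))).congr_of_eventuallyEq hev'
  have hFpos : ∀ x, 0 < F x := by
    intro x
    by_cases hx : x ∈ Ω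
    · have h0 := (hχ01 x).1
      have h1 := (hχ01 x).2
      have hfx := hfpos x hx
      show (0:ℝ) < 1 + χ₀ x * (f x - 1)
      rcases le_total (f x) 1 with h | h
      · nlinarith [mul_nonneg (sub_nonneg.mpr h1) (sub_nonneg.mpr h)]
      · nlinarith [mul_nonneg h0 (sub_nonneg.mpr h)]
    · have hxL : x ∉ L := fun h => hx (hLΩ h)
      have : χ₀ x = 0 := hχ0 x hxL
      simp [hFdef, this]
  -- the three integrals coincide with the global ones for F
  have hu0 : ∀ x ∉ Ω, u x = 0 := fun x hx =>
    image_eq_zero_of_notMem_tsupport (fun h => hx (huΩ h))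
  have hA : ∫ x in Ω, ‖fderiv ℝ u x‖ ^ 2 = ∫ x, ‖fderiv ℝ u x‖ ^ 2 := by
    apply setIntegral_eq_integral_of_forall_compl_eq_zero
    intro x hx
    have hxK : x ∉ tsupport u := fun h => hx (huΩ h)
    rw [(HasFDerivAt.of_notMem_tsupport ℝ hxK).fderiv]
    simp
  have hVd : ∀ y ∈ V, fderiv ℝ f y = fderiv ℝ F y := by
    intro y hy
    have hfeq : f =ᶠ[nhds y] F := by
      filter_upwards [hVo.mem_nhds hy] with z hz
      exact (hFeqf z hz).symm
    exact hfeq.fderiv_eq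
  have hB : (∫ x in Ω, (α * (1 - α) * ‖fderiv ℝ f x‖ ^ 2 / (f x) ^ 2
        + α * (-(laplacian f x)) / f x) * (u x) ^ 2)
      = ∫ x, (α * (1 - α) * ‖fderiv ℝ F x‖ ^ 2 / (F x) ^ 2
        + α * (-(laplacian F x)) / F x) * (u x) ^ 2 := by
    have e1 : ∫ x in Ω, (α * (1 - α) * ‖fderiv ℝ F x‖ ^ 2 / (F x) ^ 2
          + α * (-(laplacian F x)) / F x) * (u x) ^ 2
        = ∫ x, (α * (1 - α) * ‖fderiv ℝ F x‖ ^ 2 / (F x) ^ 2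
          + α * (-(laplacian F x)) / F x) * (u x) ^ 2 :=
      setIntegral_eq_integral_of_forall_compl_eq_zero (fun x hx => by simp [hu0 x hx])
    rw [← e1]
    apply setIntegral_congr_fun hΩ.measurableSet
    intro x hx
    beta_reduce
    by_cases hxV : x ∈ V
    · have h1 : fderiv ℝ f x = fderiv ℝ F x := hVd x hxV
      have h2 : f x = F x := (hFeqf x hxV).symm
      have h3 : laplacian f x = laplacian F x := by
        unfold laplacian
        refine Finset.sum_congr rfl fun i _ => ?_
        have hev : (fun y => fderiv ℝ f y (EuclideanSpace.single i 1))
            =ᶠ[nhds x] (fun y => fderiv ℝ F y (EuclideanSpace.single i 1)) := by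
          filter_upwards [hVo.mem_nhds hxV] with z hz
          rw [hVd z hz]
        rw [hev.fderiv_eq]
      rw [h1, h2, h3]
    · have hxK : x ∉ tsupport u := fun h => hxV (hKV h)
      have : u x = 0 := image_eq_zero_of_notMem_tsupport hxK
      simp [this]
  have hC : (∫ x in Ω, ‖fderiv ℝ (fun y => (f y) ^ (-α) * u y) x‖ ^ 2 * (f x) ^ (2 * α))
      = ∫ x, ‖fderiv ℝ (fun y => (F y) ^ (-α) * u y) x‖ ^ 2 * (F x) ^ (2 * α) := by
    have hzero : ∀ x, x ∉ tsupport u →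
        fderiv ℝ (fun y => (F y) ^ (-α) * u y) x = 0 := by
      intro x hxK
      have hev : (fun y => (F y) ^ (-α) * u y) =ᶠ[nhds x] (fun _ => (0:ℝ)) := by
        filter_upwards [notMem_tsupport_iff_eventuallyEq.mp hxK] with z hz
        simp [hz]
      rw [hev.fderiv_eq]
      exact fderiv_const_apply 0
    have e1 : ∫ x in Ω, ‖fderiv ℝ (fun y => (F y) ^ (-α) * u y) x‖ ^ 2 * (F x) ^ (2 * α)
        = ∫ x, ‖fderiv ℝ (fun y => (F y) ^ (-α) * u y) x‖ ^ 2 * (F x) ^ (2 * α) :=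
      setIntegral_eq_integral_of_forall_compl_eq_zero
        (fun x hx => by rw [hzero x (fun h => hx (huΩ h))]; simp)
    rw [← e1]
    apply setIntegral_congr_fun hΩ.measurableSet
    intro x hx
    beta_reduce
    by_cases hxV : x ∈ V
    · have h2 : f x = F x := (hFeqf x hxV).symm
      have h1 : fderiv ℝ (fun y => (f y) ^ (-α) * u y) x
          = fderiv ℝ (fun y => (F y) ^ (-α) * u y) x := by
        have hev : (fun y => (f y) ^ (-α) * u y)
            =ᶠ[nhds x] (fun y => (F y) ^ (-α) * u y) := by
          filter_upwards [hVo.mem_nhds hxV] with z hz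
          rw [hFeqf z hz]
        exact hev.fderiv_eq
      rw [h1, h2]
    · have hxK : x ∉ tsupport u := fun h => hxV (hKV h)
      have hz1 : fderiv ℝ (fun y => (F y) ^ (-α) * u y) x = 0 := hzero x hxK
      have hz2 : fderiv ℝ (fun y => (f y) ^ (-α) * u y) x = 0 := by
        have hev : (fun y => (f y) ^ (-α) * u y) =ᶠ[nhds x] (fun _ => (0:ℝ)) := by
          filter_upwards [notMem_tsupport_iff_eventuallyEq.mp hxK] with z hz
          simp [hz]
        rw [hev.fderiv_eq]
        exact fderiv_const_apply 0
      rw [hz1, hz2]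
      simp
  rw [hA, hB, hC]
  exact gsr_global F hFsm hFpos α u hu husupp
end

section
/- For any u ∈ C_c^∞(ℝ^N \ ⊿⊿), where ⊿⊿ is the set of points with at least two equal coordinates, ∫_{ℝ^N} |∇u|² ≥ (1/2) ∑_{1≤j<k≤N} ∫_{ℝ^N} |u(x)|²/(x_j - x_k)² dx. -/
open MeasureTheory Finset Function

noncomputable section
namespace MBH

lemma rot3 {N : ℕ} (F : Fin N → Fin N → Fin N → ℝ) :
    ∑ i, ∑ k, ∑ l, F i k l = ∑ i, ∑ k, ∑ l, F l i k :=
  calc ∑ i, ∑ k, ∑ l, F i k l = ∑ k, ∑ i, ∑ l, F i k l := Finset.sum_comm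
    _ = ∑ k, ∑ l, ∑ i, F i k l := Finset.sum_congr rfl fun k _ => Finset.sum_comm

lemma cross_zero {N : ℕ} (x : Fin N → ℝ) (hx : ∀ j k : Fin N, j ≠ k → x j ≠ x k) :
    ∑ i, ∑ k, ∑ l, (if k ≠ i ∧ l ≠ i ∧ l ≠ k then (x i - x k)⁻¹ * (x i - x l)⁻¹ else 0) = 0 := by
  set G : Fin N → Fin N → Fin N → ℝ :=
    fun i k l => if k ≠ i ∧ l ≠ i ∧ l ≠ k then (x i - x k)⁻¹ * (x i - x l)⁻¹ else 0 with hG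
  have h1 : ∑ i, ∑ k, ∑ l, G i k l = ∑ i, ∑ k, ∑ l, G l i k := rot3 G
  have h2 : ∑ i, ∑ k, ∑ l, G l i k = ∑ i, ∑ k, ∑ l, G k l i := rot3 (fun i k l => G l i k)
  have key : ∀ i k l : Fin N, G i k l + G l i k + G k l i = 0 := by
    intro i k l
    by_cases hki : k = i
    · subst hki; simp [hG]
    by_cases hli : l = i
    · subst hli; simp [hG]
    by_cases hlk : l = k
    · subst hlk; simp [hG]
    have c2 : i ≠ l ∧ k ≠ l ∧ k ≠ i := ⟨fun h => hli h.symm, fun h => hlk h.symm, hki⟩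
    have c3 : l ≠ k ∧ i ≠ k ∧ i ≠ l := ⟨hlk, fun h => hki h.symm, fun h => hli h.symm⟩
    have e1 : x i - x k ≠ 0 := sub_ne_zero.2 (hx _ _ fun h => hki h.symm)
    have e2 : x i - x l ≠ 0 := sub_ne_zero.2 (hx _ _ fun h => hli h.symm)
    have e3 : x k - x l ≠ 0 := sub_ne_zero.2 (hx _ _ fun h => hlk h.symm)
    have e4 : x k - x i ≠ 0 := sub_ne_zero.2 (hx _ _ hki)
    have e5 : x l - x i ≠ 0 := sub_ne_zero.2 (hx _ _ hli)
    have e6 : x l - x k ≠ 0 := sub_ne_zero.2 (hx _ _ hlk)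
    simp only [hG]
    rw [if_pos ⟨hki, hli, hlk⟩, if_pos c2, if_pos c3]
    field_simp
    ring
  have h3 : (3 : ℝ) * ∑ i, ∑ k, ∑ l, G i k l = 0 := by
    have hz : ∑ i, ∑ k, ∑ l, (G i k l + G l i k + G k l i) = 0 := by simp [key]
    calc (3:ℝ) * ∑ i, ∑ k, ∑ l, G i k l
        = ∑ i, ∑ k, ∑ l, G i k l + ∑ i, ∑ k, ∑ l, G l i k + ∑ i, ∑ k, ∑ l, G k l i := by
          rw [← h1, ← h2, ← h1]; ring
      _ = ∑ i, ∑ k, ∑ l, (G i k l + G l i k + G k l i) := by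
          simp [Finset.sum_add_distrib]
      _ = 0 := hz
  linarith

lemma sq_sum_inv {N : ℕ} (x : Fin N → ℝ) (hx : ∀ j k : Fin N, j ≠ k → x j ≠ x k)
    (hcross : ∑ i, ∑ k, ∑ l,
      (if k ≠ i ∧ l ≠ i ∧ l ≠ k then (x i - x k)⁻¹ * (x i - x l)⁻¹ else 0) = 0) :
    ∑ i, (∑ k, if k ≠ i then (x i - x k)⁻¹ else 0)^2
      = ∑ i, ∑ k, if k ≠ i then ((x i - x k)^2)⁻¹ else 0 := by
  have expand : ∀ i : Fin N,
      (∑ k, if k ≠ i then (x i - x k)⁻¹ else 0)^2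
        = ∑ k, ∑ l, ((if k ≠ i then (x i - x k)⁻¹ else 0) * (if l ≠ i then (x i - x l)⁻¹ else 0)) := by
    intro i
    rw [sq, Finset.sum_mul_sum]
  have split : ∀ i k l : Fin N,
      (if k ≠ i then (x i - x k)⁻¹ else 0) * (if l ≠ i then (x i - x l)⁻¹ else 0)
        = (if l = k then (if k ≠ i then ((x i - x k)^2)⁻¹ else 0) else 0)
          + (if k ≠ i ∧ l ≠ i ∧ l ≠ k then (x i - x k)⁻¹ * (x i - x l)⁻¹ else 0) := by
    intro i k l
    by_cases hki : k = i
    · simp [hki]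
    by_cases hli : l = i
    · have hik : ¬ i = k := fun h => hki h.symm
      simp only [hli, hki, ite_false, not_true, ne_eq, not_false_iff, ite_true, mul_zero]
      rw [if_neg hik, if_neg (by simp), add_zero]
    by_cases hlk : l = k
    · rw [hlk]
      simp [hki, sq, mul_inv]
    · simp [hki, hli, hlk]
  calc ∑ i, (∑ k, if k ≠ i then (x i - x k)⁻¹ else 0)^2
      = ∑ i, ∑ k, ∑ l, ((if l = k then (if k ≠ i then ((x i - x k)^2)⁻¹ else 0) else 0)
          + (if k ≠ i ∧ l ≠ i ∧ l ≠ k then (x i - x k)⁻¹ * (x i - x l)⁻¹ else 0)) := by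
        refine Finset.sum_congr rfl fun i _ => ?_
        rw [expand i]
        exact Finset.sum_congr rfl fun k _ => Finset.sum_congr rfl fun l _ => split i k l
    _ = ∑ i, ∑ k, ∑ l, (if l = k then (if k ≠ i then ((x i - x k)^2)⁻¹ else 0) else 0)
          + ∑ i, ∑ k, ∑ l, (if k ≠ i ∧ l ≠ i ∧ l ≠ k then (x i - x k)⁻¹ * (x i - x l)⁻¹ else 0) := by
        simp [Finset.sum_add_distrib]
    _ = ∑ i, ∑ k, if k ≠ i then ((x i - x k)^2)⁻¹ else 0 := by
        rw [hcross, add_zero]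
        refine Finset.sum_congr rfl fun i _ => Finset.sum_congr rfl fun k _ => ?_
        simp

lemma pair_sym {N : ℕ} (f : Fin N → Fin N → ℝ) (hf : ∀ j k, f j k = f k j) :
    ∑ j, ∑ k, (if k ≠ j then f j k else 0)
      = 2 * ∑ j, ∑ k, (if j < k then f j k else 0) := by
  have h1 : ∀ j k : Fin N, (if k ≠ j then f j k else 0)
      = (if j < k then f j k else 0) + (if k < j then f j k else 0) := by
    intro j k
    rcases lt_trichotomy j k with h | h | h
    · simp [h, ne_of_gt h, not_lt_of_gt h, h.ne']
    · simp [h]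
    · simp [h, ne_of_lt h, not_lt_of_gt h, h.ne]
  have h2 : ∑ j, ∑ k, (if k < j then f j k else 0)
      = ∑ j, ∑ k, (if j < k then f j k else 0) := by
    rw [Finset.sum_comm]
    exact Finset.sum_congr rfl fun j _ => Finset.sum_congr rfl fun k _ => by
      by_cases h : j < k <;> simp [h, hf]
  calc ∑ j, ∑ k, (if k ≠ j then f j k else 0)
      = ∑ j, ∑ k, ((if j < k then f j k else 0) + (if k < j then f j k else 0)) := by
        exact Finset.sum_congr rfl fun j _ => Finset.sum_congr rfl fun k _ => h1 j k
    _ = ∑ j, ∑ k, (if j < k then f j k else 0) + ∑ j, ∑ k, (if k < j then f j k else 0) := by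
        simp [Finset.sum_add_distrib]
    _ = 2 * ∑ j, ∑ k, (if j < k then f j k else 0) := by rw [h2]; ring

lemma sum_sq_apply_le {N : ℕ} (f : EuclideanSpace ℝ (Fin N) →L[ℝ] ℝ) :
    ∑ i, (f (EuclideanSpace.single i 1))^2 ≤ ‖f‖^2 := by
  set v : EuclideanSpace ℝ (Fin N) := WithLp.toLp 2 (fun i => f (EuclideanSpace.single i 1)) with hv
  have hrepr : v = ∑ i, (v i) • EuclideanSpace.single i (1:ℝ) := by
    simpa [EuclideanSpace.basisFun_apply, EuclideanSpace.basisFun_repr] using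
      ((EuclideanSpace.basisFun (Fin N) ℝ).sum_repr v).symm
  have hfv : f v = ∑ i, (f (EuclideanSpace.single i 1))^2 := by
    conv_lhs => rw [hrepr]
    rw [map_sum]
    refine Finset.sum_congr rfl fun i _ => ?_
    rw [_root_.map_smul]
    simp [hv, sq]
  have hnv : ‖v‖^2 = ∑ i, (f (EuclideanSpace.single i 1))^2 := by
    rw [EuclideanSpace.norm_eq, Real.sq_sqrt (by positivity)]
    refine Finset.sum_congr rfl fun i _ => ?_
    simp [hv, sq_abs]
  have hle : f v ≤ ‖f‖ * ‖v‖ := by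
    calc f v ≤ |f v| := le_abs_self _
      _ = ‖f v‖ := rfl
      _ ≤ ‖f‖ * ‖v‖ := f.le_opNorm v
  nlinarith [norm_nonneg f, norm_nonneg v, sq_nonneg (‖f‖ - ‖v‖), hfv, hnv]

variable {N : ℕ}

def Wf (i : Fin N) (x : EuclideanSpace ℝ (Fin N)) : ℝ :=
  ∑ k, if k ≠ i then (x i - x k)⁻¹ else 0

def Wd (i : Fin N) (x : EuclideanSpace ℝ (Fin N)) : EuclideanSpace ℝ (Fin N) →L[ℝ] ℝ :=
  ∑ k, if k ≠ i then
    ((-(((x i - x k)^2)⁻¹)) • (EuclideanSpace.proj i - EuclideanSpace.proj k)) else 0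

lemma hasFDerivAt_Wf (i : Fin N) {x : EuclideanSpace ℝ (Fin N)}
    (hx : ∀ j k : Fin N, j ≠ k → x j ≠ x k) :
    HasFDerivAt (Wf i) (Wd i x) x := by
  unfold Wf Wd
  apply HasFDerivAt.fun_sum
  intro k _
  by_cases h : k = i
  · simp only [h, ne_eq, not_true_eq_false, if_false, if_neg]
    exact hasFDerivAt_const _ _
  · simp only [ne_eq, h, not_false_eq_true, if_pos, ite_true]
    have hik : (i : Fin N) ≠ k := fun hh => h hh.symm
    have hne : x i - x k ≠ 0 := sub_ne_zero.2 (hx i k hik)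
    have hb1 : HasFDerivAt (fun y : EuclideanSpace ℝ (Fin N) => y i)
        (EuclideanSpace.proj (𝕜 := ℝ) i) x := (EuclideanSpace.proj (𝕜 := ℝ) i).hasFDerivAt
    have hb2 : HasFDerivAt (fun y : EuclideanSpace ℝ (Fin N) => y k)
        (EuclideanSpace.proj (𝕜 := ℝ) k) x := (EuclideanSpace.proj (𝕜 := ℝ) k).hasFDerivAt
    have hbase := hb1.sub hb2
    have hcomp := (hasFDerivAt_inv hne).comp x hbase
    convert hcomp using 1
    · rfl
    ext v
    simp only [ContinuousLinearMap.smul_apply, ContinuousLinearMap.sub_apply,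
      ContinuousLinearMap.comp_apply, ContinuousLinearMap.smulRight_apply,
      ContinuousLinearMap.one_apply, smul_eq_mul, PiLp.proj_apply,
      ContinuousLinearMap.toSpanSingleton_apply]
    ring

lemma fderiv_V_apply {u : EuclideanSpace ℝ (Fin N) → ℝ} (hu : ContDiff ℝ (⊤ : ℕ∞) u)
    (i : Fin N) {x : EuclideanSpace ℝ (Fin N)}
    (hx : ∀ j k : Fin N, j ≠ k → x j ≠ x k) :
    fderiv ℝ (fun y => (u y)^2 * Wf i y) x (EuclideanSpace.single i 1)
      = 2 * u x * (fderiv ℝ u x (EuclideanSpace.single i 1)) * Wf i x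
        + (u x)^2 * (∑ k, if k ≠ i then -(((x i - x k)^2)⁻¹) else 0) := by
  have hu' : HasFDerivAt u (fderiv ℝ u x) x := (hu.differentiable (by simp) x).hasFDerivAt
  have hsq : HasFDerivAt (fun y => (u y)^2)
      (u x • fderiv ℝ u x + u x • fderiv ℝ u x) x := by
    simpa [pow_two] using hu'.fun_mul hu'
  have hVd := hsq.fun_mul (hasFDerivAt_Wf i hx)
  rw [hVd.fderiv]
  simp only [ContinuousLinearMap.add_apply, ContinuousLinearMap.smul_apply, Wd,
    ContinuousLinearMap.sum_apply,
    apply_ite (fun L : EuclideanSpace ℝ (Fin N) →L[ℝ] ℝ => L (EuclideanSpace.single i 1)),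
    ContinuousLinearMap.sub_apply, PiLp.proj_apply,
    EuclideanSpace.single_apply, ContinuousLinearMap.zero_apply, smul_eq_mul]
  rw [show (∑ k : Fin N,
      if k ≠ i then -((x i - x k) ^ 2)⁻¹ * ((if True then (1:ℝ) else 0) - if k = i then 1 else 0)
      else 0) = ∑ k : Fin N, if k ≠ i then -((x i - x k) ^ 2)⁻¹ else 0 from
    Finset.sum_congr rfl fun k _ => by by_cases h : k = i <;> simp [h]]
  ring

lemma contDiff_V {u : EuclideanSpace ℝ (Fin N) → ℝ} (hu : ContDiff ℝ (⊤ : ℕ∞) u)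
    (hdiag : ∀ x ∈ tsupport u, ∀ j k : Fin N, j ≠ k → x j ≠ x k) (i : Fin N) :
    ContDiff ℝ (⊤ : ℕ∞) (fun y => (u y)^2 * Wf i y) := by
  rw [contDiff_iff_contDiffAt]
  intro x
  by_cases hx : x ∈ tsupport u
  · have hxd := hdiag x hx
    have hW : ContDiffAt ℝ (⊤ : ℕ∞) (Wf i) x := by
      unfold Wf
      apply ContDiffAt.sum
      intro k _
      by_cases h : k = i
      · simp only [h, ne_eq, not_true_eq_false, if_false, if_neg]
        exact contDiffAt_const
      · simp only [ne_eq, h, not_false_eq_true, ite_true]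
        have h1 : ContDiffAt ℝ (⊤ : ℕ∞) (fun y : EuclideanSpace ℝ (Fin N) => y i - y k) x := by
          have hc1 : ContDiff ℝ (⊤ : ℕ∞) (fun y : EuclideanSpace ℝ (Fin N) => y i) :=
            (EuclideanSpace.proj (𝕜 := ℝ) i).contDiff
          have hc2 : ContDiff ℝ (⊤ : ℕ∞) (fun y : EuclideanSpace ℝ (Fin N) => y k) :=
            (EuclideanSpace.proj (𝕜 := ℝ) k).contDiff
          exact (hc1.sub hc2).contDiffAt
        exact h1.inv (sub_ne_zero.2 (hxd i k fun hh => h hh.symm))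
    exact ((hu.pow 2).contDiffAt).mul hW
  · have hopen : IsOpen (tsupport u)ᶜ := (isClosed_tsupport u).isOpen_compl
    have hev : (fun y => (u y)^2 * Wf i y) =ᶠ[nhds x] (fun _ => (0:ℝ)) := by
      filter_upwards [hopen.mem_nhds hx] with y hy
      simp [image_eq_zero_of_notMem_tsupport hy]
    exact contDiffAt_const.congr_of_eventuallyEq hev

lemma support_V {u : EuclideanSpace ℝ (Fin N) → ℝ} (i : Fin N) :
    Function.support (fun y => (u y)^2 * Wf i y) ⊆ tsupport u := by
  intro x hx
  by_contra h
  exact hx (by simp [image_eq_zero_of_notMem_tsupport h])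

lemma integral_fderiv_V_zero {u : EuclideanSpace ℝ (Fin N) → ℝ} (hu : ContDiff ℝ (⊤ : ℕ∞) u)
    (hsupp : HasCompactSupport u)
    (hdiag : ∀ x ∈ tsupport u, ∀ j k : Fin N, j ≠ k → x j ≠ x k) (i : Fin N) :
    ∫ x, fderiv ℝ (fun y => (u y)^2 * Wf i y) x (EuclideanSpace.single i 1) = 0 := by
  set V : EuclideanSpace ℝ (Fin N) → ℝ := fun y => (u y)^2 * Wf i y with hV
  have hVc : ContDiff ℝ (⊤ : ℕ∞) V := contDiff_V hu hdiag i
  have hVsupp : HasCompactSupport V := hsupp.mono' (support_V i)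
  have hfd : HasCompactSupport (fderiv ℝ V) := hVsupp.fderiv ℝ
  have hcont : Continuous fun x => fderiv ℝ V x (EuclideanSpace.single i 1) :=
    (hVc.continuous_fderiv (by simp)).clm_apply continuous_const
  have hfd' : HasCompactSupport fun x => fderiv ℝ V x (EuclideanSpace.single i 1) := by
    apply hfd.mono'
    intro x hx
    have : fderiv ℝ V x ≠ 0 := fun h => hx (by simp [h])
    exact subset_tsupport _ this
  have h1 : Integrable (fun x => fderiv ℝ V x (EuclideanSpace.single i 1) * (fun _ => (1:ℝ)) x)
      (volume : Measure (EuclideanSpace ℝ (Fin N))) := by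
    simpa using hcont.integrable_of_hasCompactSupport hfd'
  have h2 : Integrable (fun x => V x * fderiv ℝ (fun _ => (1:ℝ)) x (EuclideanSpace.single i 1))
      (volume : Measure (EuclideanSpace ℝ (Fin N))) := by
    simpa [fderiv_const] using (integrable_zero _ ℝ (volume : Measure (EuclideanSpace ℝ (Fin N))))
  have h3 : Integrable (fun x => V x * (fun _ => (1:ℝ)) x)
      (volume : Measure (EuclideanSpace ℝ (Fin N))) := by
    simpa using hVc.continuous.integrable_of_hasCompactSupport hVsupp
  have := integral_mul_fderiv_eq_neg_fderiv_mul_of_integrable h1 h2 h3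
    (fun x _ => hVc.differentiable (by simp) x) (fun x _ => differentiable_const (1:ℝ) x)
    (v := EuclideanSpace.single i 1)
  simp only [fderiv_const, fderiv_const_apply, Pi.zero_apply, ContinuousLinearMap.zero_apply, mul_zero, mul_one,
    integral_zero] at this
  linarith [this]

lemma pointwise_bound {u : EuclideanSpace ℝ (Fin N) → ℝ} (hu : ContDiff ℝ (⊤ : ℕ∞) u)
    (hdiag : ∀ x ∈ tsupport u, ∀ j k : Fin N, j ≠ k → x j ≠ x k)
    (x : EuclideanSpace ℝ (Fin N)) :
    (1/2) * (∑ i, fderiv ℝ (fun y => (u y)^2 * Wf i y) x (EuclideanSpace.single i 1))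
      + (1/2) * ∑ j, ∑ k, (if j < k then (u x)^2 / ((x j - x k)^2) else 0)
      ≤ ‖fderiv ℝ u x‖^2 := by
  by_cases hx : x ∈ tsupport u
  · have hxd := hdiag x hx
    have negsum : ∀ i : Fin N, (∑ k, if k ≠ i then -(((x i - x k)^2)⁻¹) else 0)
        = -(∑ k, if k ≠ i then ((x i - x k)^2)⁻¹ else 0) := by
      intro i
      rw [← Finset.sum_neg_distrib]
      exact Finset.sum_congr rfl fun k _ => by by_cases h : k ≠ i <;> simp [h]
    have hP : (∑ i, fderiv ℝ (fun y => (u y)^2 * Wf i y) x (EuclideanSpace.single i 1))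
        = ∑ i, (2 * u x * (fderiv ℝ u x (EuclideanSpace.single i 1)) * Wf i x
            + (u x)^2 * (-(∑ k, if k ≠ i then ((x i - x k)^2)⁻¹ else 0))) :=
      Finset.sum_congr rfl fun i _ => by rw [fderiv_V_apply hu i hxd, negsum i]
    have hQ : ∑ j, ∑ k, (if j < k then (u x)^2 / ((x j - x k)^2) else 0)
        = (u x)^2 * ∑ j, ∑ k, (if j < k then (((x j - x k)^2)⁻¹) else 0) := by
      rw [Finset.mul_sum]
      refine Finset.sum_congr rfl fun j _ => ?_
      rw [Finset.mul_sum]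
      exact Finset.sum_congr rfl fun k _ => by
        by_cases h : j < k <;> simp [h, div_eq_mul_inv]
    have key1 : ∑ i, (Wf i x)^2 = ∑ i, ∑ k, (if k ≠ i then ((x i - x k)^2)⁻¹ else 0) := by
      have := sq_sum_inv (fun i => x i) hxd (cross_zero (fun i => x i) hxd)
      simpa [Wf] using this
    have key2 : (∑ i, ∑ k, (if k ≠ i then ((x i - x k)^2)⁻¹ else 0))
        = 2 * ∑ j, ∑ k, (if j < k then ((x j - x k)^2)⁻¹ else 0) :=
      pair_sym _ (fun j k => by rw [show (x j - x k)^2 = (x k - x j)^2 by ring])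
    have key3 := sum_sq_apply_le (fderiv ℝ u x)
    have key4 : ∑ i, (2 * u x * (fderiv ℝ u x (EuclideanSpace.single i 1)) * Wf i x
            + (u x)^2 * (-(∑ k, if k ≠ i then ((x i - x k)^2)⁻¹ else 0)))
        ≤ ∑ i, (2 * (fderiv ℝ u x (EuclideanSpace.single i 1))^2 + ((u x)^2/2) * (Wf i x)^2
            - (u x)^2 * (∑ k, if k ≠ i then ((x i - x k)^2)⁻¹ else 0)) :=
      Finset.sum_le_sum fun i _ => by
        nlinarith [sq_nonneg (fderiv ℝ u x (EuclideanSpace.single i 1) - u x * Wf i x / 2)]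
    have key5 : ∑ i, (2 * (fderiv ℝ u x (EuclideanSpace.single i 1))^2 + ((u x)^2/2) * (Wf i x)^2
            - (u x)^2 * (∑ k, if k ≠ i then ((x i - x k)^2)⁻¹ else 0))
        = 2 * (∑ i, (fderiv ℝ u x (EuclideanSpace.single i 1))^2)
          + ((u x)^2/2) * (∑ i, (Wf i x)^2)
          - (u x)^2 * (∑ i, ∑ k, (if k ≠ i then ((x i - x k)^2)⁻¹ else 0)) := by
      rw [Finset.sum_sub_distrib, Finset.sum_add_distrib, ← Finset.mul_sum, ← Finset.mul_sum,
        ← Finset.mul_sum]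
    rw [hP, hQ]
    rw [key1, key2] at key5
    linarith [key4, key5, key3]
  · have hu0 : u x = 0 := image_eq_zero_of_notMem_tsupport hx
    have hopen : IsOpen (tsupport u)ᶜ := (isClosed_tsupport u).isOpen_compl
    have hfz : ∀ i : Fin N,
        fderiv ℝ (fun y => (u y)^2 * Wf i y) x = 0 := by
      intro i
      have hev : (fun y => (u y)^2 * Wf i y) =ᶠ[nhds x] (fun _ => (0:ℝ)) := by
        filter_upwards [hopen.mem_nhds hx] with y hy
        simp [image_eq_zero_of_notMem_tsupport hy]
      rw [hev.fderiv_eq]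
      exact fderiv_const_apply 0
    have : ∀ j k : Fin N, (if j < k then (u x)^2 / ((x j - x k)^2) else 0) = 0 := by
      intro j k
      by_cases h : j < k <;> simp [h, hu0]
    simp only [hfz, ContinuousLinearMap.zero_apply, Finset.sum_const_zero, mul_zero, this,
      zero_add]
    positivity

lemma integrable_fderiv_V {u : EuclideanSpace ℝ (Fin N) → ℝ} (hu : ContDiff ℝ (⊤ : ℕ∞) u)
    (hsupp : HasCompactSupport u)
    (hdiag : ∀ x ∈ tsupport u, ∀ j k : Fin N, j ≠ k → x j ≠ x k) (i : Fin N) :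
    Integrable (fun x => fderiv ℝ (fun y => (u y)^2 * Wf i y) x (EuclideanSpace.single i 1))
      (volume : Measure (EuclideanSpace ℝ (Fin N))) := by
  set V : EuclideanSpace ℝ (Fin N) → ℝ := fun y => (u y)^2 * Wf i y with hV
  have hVc : ContDiff ℝ (⊤ : ℕ∞) V := contDiff_V hu hdiag i
  have hVsupp : HasCompactSupport V := hsupp.mono' (support_V i)
  have hfd : HasCompactSupport (fderiv ℝ V) := hVsupp.fderiv ℝ
  have hcont : Continuous fun x => fderiv ℝ V x (EuclideanSpace.single i 1) :=
    (hVc.continuous_fderiv (by simp)).clm_apply continuous_const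
  have hfd' : HasCompactSupport fun x => fderiv ℝ V x (EuclideanSpace.single i 1) := by
    apply hfd.mono'
    intro x hx
    have : fderiv ℝ V x ≠ 0 := fun h => hx (by simp [h])
    exact subset_tsupport _ this
  exact hcont.integrable_of_hasCompactSupport hfd'

lemma integrable_pair {u : EuclideanSpace ℝ (Fin N) → ℝ} (hu : ContDiff ℝ (⊤ : ℕ∞) u)
    (hsupp : HasCompactSupport u)
    (hdiag : ∀ x ∈ tsupport u, ∀ j k : Fin N, j ≠ k → x j ≠ x k) (j k : Fin N) :
    Integrable (fun x : EuclideanSpace ℝ (Fin N) =>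
      if j < k then (u x)^2 / ((x j - x k)^2) else 0)
      (volume : Measure (EuclideanSpace ℝ (Fin N))) := by
  by_cases h : j < k
  · simp only [if_pos h]
    have hcont : Continuous fun x : EuclideanSpace ℝ (Fin N) => (u x)^2 / ((x j - x k)^2) := by
      rw [continuous_iff_continuousAt]
      intro x
      by_cases hx : x ∈ tsupport u
      · have hne : x j - x k ≠ 0 := sub_ne_zero.2 (hdiag x hx j k (ne_of_lt h))
        have h1 : ContinuousAt (fun y : EuclideanSpace ℝ (Fin N) => (u y)^2) x :=
          ((hu.continuous).pow 2).continuousAt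
        have h2 : ContinuousAt (fun y : EuclideanSpace ℝ (Fin N) => (y j - y k)^2) x := by
          have hc1 : Continuous (fun y : EuclideanSpace ℝ (Fin N) => y j) :=
            (EuclideanSpace.proj (𝕜 := ℝ) j).continuous
          have hc2 : Continuous (fun y : EuclideanSpace ℝ (Fin N) => y k) :=
            (EuclideanSpace.proj (𝕜 := ℝ) k).continuous
          exact (((hc1.sub hc2).pow 2)).continuousAt
        exact h1.div h2 (pow_ne_zero 2 hne)
      · have hopen : IsOpen (tsupport u)ᶜ := (isClosed_tsupport u).isOpen_compl
        have hev : (fun _ => (0:ℝ)) =ᶠ[nhds x]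
            (fun y : EuclideanSpace ℝ (Fin N) => (u y)^2 / ((y j - y k)^2)) := by
          filter_upwards [hopen.mem_nhds hx] with y hy
          simp [image_eq_zero_of_notMem_tsupport hy]
        exact continuousAt_const.congr hev
    have hcs : HasCompactSupport
        (fun x : EuclideanSpace ℝ (Fin N) => (u x)^2 / ((x j - x k)^2)) := by
      apply hsupp.mono'
      intro x hx
      apply subset_tsupport
      intro h0
      exact hx (by simp [h0])
    exact hcont.integrable_of_hasCompactSupport hcs
  · simp only [if_neg h]
    exact integrable_zero _ _ _

end MBH


open MBH in
/-- **One-dimensional many-body Hardy inequality**: for any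
`u ∈ C_c^∞(ℝ^N \ ⊿⊿)`, where `⊿⊿` is the set of points with at least two equal
coordinates, `∫ |∇u|² ≥ (1/2) ∑_{j<k} ∫ |u(x)|²/(x_j-x_k)² dx`. -/
theorem many_body_hardy_1d (N : ℕ)
    (u : EuclideanSpace ℝ (Fin N) → ℝ)
    (hu : ContDiff ℝ (⊤ : ℕ∞) u) (hsupp : HasCompactSupport u)
    (hdiag : ∀ x ∈ tsupport u, ∀ j k : Fin N, j ≠ k → x j ≠ x k) :
    ∫ x, ‖fderiv ℝ u x‖ ^ 2 ≥
      (1 / 2) * ∑ j : Fin N, ∑ k : Fin N,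
        (if j < k then ∫ x, (u x) ^ 2 / (x j - x k) ^ 2 else 0) := by
  have hInt2 : Integrable (fun x : EuclideanSpace ℝ (Fin N) => ‖fderiv ℝ u x‖^2)
      (volume : Measure (EuclideanSpace ℝ (Fin N))) := by
    have hcont : Continuous fun x : EuclideanSpace ℝ (Fin N) => ‖fderiv ℝ u x‖^2 :=
      ((hu.continuous_fderiv (by simp)).norm).pow 2
    have hcs : HasCompactSupport fun x : EuclideanSpace ℝ (Fin N) => ‖fderiv ℝ u x‖^2 := by
      apply (hsupp.fderiv ℝ).mono'
      intro x hx
      apply subset_tsupport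
      intro h0
      exact hx (by simp [h0])
    exact hcont.integrable_of_hasCompactSupport hcs
  have hIntA : ∀ i : Fin N, Integrable
      (fun x => fderiv ℝ (fun y => (u y)^2 * Wf i y) x (EuclideanSpace.single i 1))
      (volume : Measure (EuclideanSpace ℝ (Fin N))) :=
    integrable_fderiv_V hu hsupp hdiag
  have hIntB := integrable_pair hu hsupp hdiag
  have hIntS1 : Integrable (fun x : EuclideanSpace ℝ (Fin N) =>
      ∑ i, fderiv ℝ (fun y => (u y)^2 * Wf i y) x (EuclideanSpace.single i 1))
      (volume : Measure (EuclideanSpace ℝ (Fin N))) :=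
    integrable_finset_sum _ (fun i _ => hIntA i)
  have hIntS2 : Integrable (fun x : EuclideanSpace ℝ (Fin N) =>
      ∑ j, ∑ k, (if j < k then (u x)^2 / ((x j - x k)^2) else 0))
      (volume : Measure (EuclideanSpace ℝ (Fin N))) :=
    integrable_finset_sum _ (fun j _ => integrable_finset_sum _ (fun k _ => hIntB j k))
  have hIntL : Integrable (fun x : EuclideanSpace ℝ (Fin N) =>
      (1/2) * (∑ i, fderiv ℝ (fun y => (u y)^2 * Wf i y) x (EuclideanSpace.single i 1))
        + (1/2) * ∑ j, ∑ k, (if j < k then (u x)^2 / ((x j - x k)^2) else 0))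
      (volume : Measure (EuclideanSpace ℝ (Fin N))) :=
    (hIntS1.const_mul _).add (hIntS2.const_mul _)
  have hmono : ∫ x : EuclideanSpace ℝ (Fin N),
      ((1/2) * (∑ i, fderiv ℝ (fun y => (u y)^2 * Wf i y) x (EuclideanSpace.single i 1))
        + (1/2) * ∑ j, ∑ k, (if j < k then (u x)^2 / ((x j - x k)^2) else 0))
      ≤ ∫ x : EuclideanSpace ℝ (Fin N), ‖fderiv ℝ u x‖^2 :=
    integral_mono hIntL hInt2 (pointwise_bound hu hdiag)
  have hsplit : ∫ x : EuclideanSpace ℝ (Fin N),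
      ((1/2) * (∑ i, fderiv ℝ (fun y => (u y)^2 * Wf i y) x (EuclideanSpace.single i 1))
        + (1/2) * ∑ j, ∑ k, (if j < k then (u x)^2 / ((x j - x k)^2) else 0))
      = (1/2) * (∑ i, ∫ x : EuclideanSpace ℝ (Fin N),
          fderiv ℝ (fun y => (u y)^2 * Wf i y) x (EuclideanSpace.single i 1))
        + (1/2) * ∑ j, ∑ k, ∫ x : EuclideanSpace ℝ (Fin N),
          (if j < k then (u x)^2 / ((x j - x k)^2) else 0) := by
    rw [integral_add (hIntS1.const_mul _) (hIntS2.const_mul _), integral_const_mul,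
      integral_const_mul, integral_finset_sum _ (fun i _ => hIntA i),
      integral_finset_sum _ (fun j _ => integrable_finset_sum _ (fun k _ => hIntB j k))]
    congr 2
    exact Finset.sum_congr rfl fun j _ =>
      integral_finset_sum _ (fun k _ => hIntB j k)
  have hzero : ∀ i : Fin N, ∫ x : EuclideanSpace ℝ (Fin N),
      fderiv ℝ (fun y => (u y)^2 * Wf i y) x (EuclideanSpace.single i 1) = 0 :=
    integral_fderiv_V_zero hu hsupp hdiag
  have hB : ∀ j k : Fin N, (∫ x : EuclideanSpace ℝ (Fin N),
      (if j < k then (u x)^2 / ((x j - x k)^2) else 0))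
      = (if j < k then ∫ x : EuclideanSpace ℝ (Fin N), (u x)^2 / ((x j - x k)^2) else 0) := by
    intro j k
    by_cases h : j < k <;> simp [h]
  rw [ge_iff_le]
  calc (1 / 2) * ∑ j : Fin N, ∑ k : Fin N,
        (if j < k then ∫ x, (u x) ^ 2 / (x j - x k) ^ 2 else 0)
      = (1/2) * (∑ i : Fin N, ∫ x : EuclideanSpace ℝ (Fin N),
          fderiv ℝ (fun y => (u y)^2 * Wf i y) x (EuclideanSpace.single i 1))
        + (1/2) * ∑ j, ∑ k, ∫ x : EuclideanSpace ℝ (Fin N),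
          (if j < k then (u x)^2 / ((x j - x k)^2) else 0) := by
        simp only [hzero, Finset.sum_const_zero, mul_zero, zero_add, hB]
    _ = ∫ x : EuclideanSpace ℝ (Fin N),
        ((1/2) * (∑ i, fderiv ℝ (fun y => (u y)^2 * Wf i y) x (EuclideanSpace.single i 1))
          + (1/2) * ∑ j, ∑ k, (if j < k then (u x)^2 / ((x j - x k)^2) else 0)) := hsplit.symm
    _ ≤ ∫ x : EuclideanSpace ℝ (Fin N), ‖fderiv ℝ u x‖^2 := hmono
end
end

section
/- For a radial, nonincreasing, nonnegative function u on ℝ^d and any p > 2, one has ∫_{ℝ^d} (u(x)²/|x|^{d(1-2/p)}) dx ≥ |B^d|^{1-2/p} ‖u‖_p², where B^d is the unit ball in ℝ^d. -/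
/-!
For `x ≠ 0` write `w(x) = u(x)² / ‖x‖^α` with `α = d (1 - 2/p)`. As `u` is radially
nonincreasing and `α ≥ 0`, `w(y) ≥ w(x)` on the ball of radius `‖x‖`, so the weighted integral
`L = ∫ w` is at least `w(x) ‖x‖^d |B^d|`. The identity `u(x)^p = w(x) (w(x) ‖x‖^d)^((p-2)/2)`
then gives `u(x)^p ≤ (L / |B^d|)^((p-2)/2) w(x)`; integrating and raising to the power `2/p`
yields `‖u‖_p² ≤ L / |B^d|^(1-2/p)`.
-/

open MeasureTheory

theorem ENNReal.rpow_one_sub_mul_rpow_le {B I L : ENNReal} {t : ℝ} (ht0 : 0 < t) (ht1 : t ≤ 1)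
    (hB0 : B ≠ 0) (hB : B ≠ ⊤) (hI : I ≤ (L / B) ^ ((1 - t) / t) * L) :
    B ^ (1 - t) * I ^ t ≤ L :=
  calc B ^ (1 - t) * I ^ t ≤ B ^ (1 - t) * ((L / B) ^ ((1 - t) / t) * L) ^ t := by gcongr
    _ = (B * (L / B)) ^ (1 - t) * L ^ t := by
      rw [ENNReal.mul_rpow_of_nonneg _ _ ht0.le, ← ENNReal.rpow_mul, div_mul_cancel₀ _ ht0.ne',
        ENNReal.mul_rpow_of_nonneg _ _ (sub_nonneg.2 ht1), mul_assoc]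
    _ = L := by
      rw [ENNReal.mul_div_cancel hB0 hB, ← ENNReal.rpow_add_of_nonneg _ _ (sub_nonneg.2 ht1) ht0.le,
        sub_add_cancel, ENNReal.rpow_one]

theorem Real.rpow_eq_div_rpow_mul {a r p : ℝ} (ha : 0 ≤ a) (hr : 0 < r) (hp : p ≠ 0) (d : ℝ) :
    a ^ p = a ^ 2 / r ^ (d * (1 - 2 / p)) *
      (a ^ 2 / r ^ (d * (1 - 2 / p)) * r ^ d) ^ ((p - 2) / 2) := by
  have hw : a ^ 2 / r ^ (d * (1 - 2 / p)) * r ^ d = a ^ 2 * r ^ (2 * d / p) := by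
    rw [div_mul_eq_mul_div, mul_div_assoc, ← Real.rpow_sub hr]
    ring_nf
  have hr_exp : 2 * d / p * ((p - 2) / 2) = d * (1 - 2 / p) := by field_simp
  have ha_exp : (2 : ℝ) * ((p - 2) / 2) = p - 2 := by ring
  rw [hw, Real.mul_rpow (by positivity) (by positivity), ← Real.rpow_mul hr.le, hr_exp,
    ← Real.rpow_natCast, ← Real.rpow_mul ha, Nat.cast_ofNat, ha_exp, div_mul_eq_mul_div,
    ← mul_assoc, mul_div_cancel_right₀ _ (Real.rpow_pos_of_pos hr _).ne',
    ← Real.rpow_add' ha (by simpa using hp), add_sub_cancel]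

section NormedGroup

variable {E : Type*} [NormedAddCommGroup E] [MeasurableSpace E] [OpensMeasurableSpace E]

theorem measure_ball_mul_le_lintegral (μ : Measure E) [NullSingletonClass μ] {g : E → ENNReal}
    {x : E} (hg : ∀ y, y ≠ 0 → ‖y‖ < ‖x‖ → g x ≤ g y) :
    μ (Metric.ball 0 ‖x‖) * g x ≤ ∫⁻ y, g y ∂μ :=
  calc μ (Metric.ball 0 ‖x‖) * g x = ∫⁻ _ in Metric.ball 0 ‖x‖, g x ∂μ := by
        rw [setLIntegral_const, mul_comm]
    _ ≤ ∫⁻ y in Metric.ball 0 ‖x‖, g y ∂μ := by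
        refine lintegral_mono_ae ?_
        filter_upwards [ae_restrict_mem Metric.isOpen_ball.measurableSet,
          ae_restrict_of_ae (μ.ae_ne 0)] with y hy hy0
        exact hg y hy0 (mem_ball_zero_iff.1 hy)
    _ ≤ ∫⁻ y, g y ∂μ := setLIntegral_le_lintegral _ _

end NormedGroup

section AddHaar

variable {E : Type*} [NormedAddCommGroup E] [NormedSpace ℝ E] [MeasurableSpace E] [BorelSpace E]
  [FiniteDimensional ℝ E] [Nontrivial E] (μ : Measure E) [μ.IsAddHaarMeasure]
  {u : E → ℝ} {p : ℝ}

theorem ofReal_div_rpow_norm_mul_le_lintegral (hu : ∀ x, 0 ≤ u x)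
    (hmono : ∀ x y, ‖x‖ ≤ ‖y‖ → u y ≤ u x) (hp : 2 ≤ p) (x : E) :
    ENNReal.ofReal (u x ^ 2 / ‖x‖ ^ (Module.finrank ℝ E * (1 - 2 / p))) *
        ENNReal.ofReal (‖x‖ ^ Module.finrank ℝ E) * μ (Metric.ball 0 1) ≤
      ∫⁻ y, ENNReal.ofReal (u y ^ 2 / ‖y‖ ^ (Module.finrank ℝ E * (1 - 2 / p))) ∂μ := by
  have hα : 0 ≤ (Module.finrank ℝ E : ℝ) * (1 - 2 / p) := by
    have : 2 / p ≤ 1 := (div_le_one (by linarith)).2 hp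
    positivity
  rw [mul_assoc, ← Measure.addHaar_ball μ 0 (norm_nonneg x), mul_comm]
  refine measure_ball_mul_le_lintegral μ fun y hy hyx => ENNReal.ofReal_le_ofReal ?_
  have hy0 : 0 < ‖y‖ := norm_pos_iff.2 hy
  have hux : u x ≤ u y := hmono y x hyx.le
  have hx0 : 0 ≤ u x := hu x
  gcongr

theorem lintegral_rpow_le_of_norm_antitone (hu : ∀ x, 0 ≤ u x)
    (hmono : ∀ x y, ‖x‖ ≤ ‖y‖ → u y ≤ u x) (hp : 2 ≤ p) :
    ∫⁻ x, ENNReal.ofReal (u x ^ p) ∂μ ≤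
      ((∫⁻ x, ENNReal.ofReal (u x ^ 2 / ‖x‖ ^ (Module.finrank ℝ E * (1 - 2 / p))) ∂μ) /
          μ (Metric.ball 0 1)) ^ ((p - 2) / 2) *
        ∫⁻ x, ENNReal.ofReal (u x ^ 2 / ‖x‖ ^ (Module.finrank ℝ E * (1 - 2 / p))) ∂μ := by
  set d := Module.finrank ℝ E
  set L := ∫⁻ x, ENNReal.ofReal (u x ^ 2 / ‖x‖ ^ (d * (1 - 2 / p))) ∂μ
  have hB0 : μ (Metric.ball 0 1) ≠ 0 := (Metric.measure_ball_pos μ _ one_pos).ne'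
  have hB : μ (Metric.ball 0 1) ≠ ⊤ := measure_ball_lt_top.ne
  have hq : 0 ≤ (p - 2) / 2 := by linarith
  rcases eq_or_ne L ⊤ with hL | hL
  · simp [hL, ENNReal.mul_top, ENNReal.rpow_eq_zero_iff, hB, hq.not_gt]
  rw [← lintegral_const_mul' _ _ (ENNReal.rpow_ne_top_of_nonneg hq (ENNReal.div_ne_top hL hB0))]
  refine lintegral_mono_ae ?_
  filter_upwards [μ.ae_ne 0] with x hx
  have hw : 0 ≤ u x ^ 2 / ‖x‖ ^ (d * (1 - 2 / p)) := by positivity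
  calc ENNReal.ofReal (u x ^ p)
      = ENNReal.ofReal (u x ^ 2 / ‖x‖ ^ (d * (1 - 2 / p))) *
          (ENNReal.ofReal (u x ^ 2 / ‖x‖ ^ (d * (1 - 2 / p))) * ENNReal.ofReal (‖x‖ ^ d)) ^
            ((p - 2) / 2) := by
        rw [← ENNReal.ofReal_mul hw, ENNReal.ofReal_rpow_of_nonneg (by positivity) hq,
          ← ENNReal.ofReal_mul hw, ← Real.rpow_natCast ‖x‖ d,
          ← Real.rpow_eq_div_rpow_mul (hu x) (norm_pos_iff.2 hx) (by linarith)]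
    _ ≤ _ := by
      rw [mul_comm]
      gcongr
      exact (ENNReal.le_div_iff_mul_le (.inl hB0) (.inl hB)).2
        (ofReal_div_rpow_norm_mul_le_lintegral μ hu hmono hp x)

end AddHaar

theorem radial_decreasing_hardy_sobolev_general
    (d : ℕ) (hd : 1 ≤ d) (p : ℝ) (hp : 2 < p)
    (u : EuclideanSpace ℝ (Fin d) → ℝ)
    (hnonneg : ∀ x, 0 ≤ u x)
    (hmono : ∀ x y, ‖x‖ ≤ ‖y‖ → u y ≤ u x) :
    ∫⁻ x, ENNReal.ofReal ((u x) ^ 2 / ‖x‖ ^ ((d : ℝ) * (1 - 2 / p))) ≥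
      (volume (Metric.ball (0 : EuclideanSpace ℝ (Fin d)) 1)) ^ (1 - 2 / p) *
        (∫⁻ x, ENNReal.ofReal ((u x) ^ p)) ^ ((2 : ℝ) / p) := by
  have : Nontrivial (EuclideanSpace ℝ (Fin d)) :=
    have : Nonempty (Fin d) := Fin.pos_iff_nonempty.1 hd
    inferInstance
  have hI := lintegral_rpow_le_of_norm_antitone volume hnonneg hmono hp.le
  rw [finrank_euclideanSpace_fin] at hI
  have hq : (p - 2) / 2 = (1 - 2 / p) / (2 / p) := by field_simp
  rw [hq] at hI
  exact ENNReal.rpow_one_sub_mul_rpow_le (by positivity) ((div_le_one (by positivity)).2 hp.le)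
    (Metric.measure_ball_pos volume _ one_pos).ne' measure_ball_lt_top.ne hI

/-- For a radial, nonincreasing, nonnegative function `u` on `ℝ^d` and `p > 2`,
`∫ u(x)²/|x|^{d(1-2/p)} dx ≥ |B^d|^{1-2/p} ‖u‖_p²`, where `B^d` is the unit
ball in `ℝ^d`. -/
theorem radial_decreasing_hardy_sobolev
    (d : ℕ) (hd : 1 ≤ d) (p : ℝ) (hp : 2 < p)
    (u : EuclideanSpace ℝ (Fin d) → ℝ)
    (hnonneg : ∀ x, 0 ≤ u x)
    (hradial : ∀ x y, ‖x‖ = ‖y‖ → u x = u y)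
    (hmono : ∀ x y, ‖x‖ ≤ ‖y‖ → u y ≤ u x) :
    ∫⁻ x, ENNReal.ofReal ((u x) ^ 2 / ‖x‖ ^ ((d : ℝ) * (1 - 2 / p))) ≥
      (volume (Metric.ball (0 : EuclideanSpace ℝ (Fin d)) 1)) ^ (1 - 2 / p) *
        (∫⁻ x, ENNReal.ofReal ((u x) ^ p)) ^ ((2 : ℝ) / p) :=
  radial_decreasing_hardy_sobolev_general d hd p hp u hnonneg hmono
end

section
/- Let β₀ ∈ ℝ and let u ∈ H¹([0,π]) satisfy the boundary condition u(π) = e^{iπβ₀} u(0). If |β₀| ≤ 1 then ∫_0^π |u'|² ≥ β₀² ∫_0^π |u|². -/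
/-!
Gauge away the twist: `v x = e^{iβ(a-x)} u x` is periodic on `[a, b]`, and
`g x = e^{iβ(a-x)} u' x = v' x + iβ v x`. Integrating by parts against the Fourier modes of
period `b - a` gives `ĝ n = i (2πn/(b-a) + β) v̂ n`, so by Parseval `∫ |u'|² = ∫ |g|²` dominates
`min_n (2πn/(b-a) + β)² ∫ |v|² = min_n (2πn/(b-a) + β)² ∫ |u|²`. On `[0, π]` the frequencies are
`2n + β`, and `(2n + β)² ≥ β²` for every integer `n` exactly when `|β| ≤ 1`.
-/

open MeasureTheory Set Complex
open scoped Interval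

theorem ContinuousOn.memLp_restrict_of_subset_isCompact {X E : Type*} [TopologicalSpace X]
    [MeasurableSpace X] [OpensMeasurableSpace X] [NormedAddCommGroup E]
    {μ : Measure X} [IsFiniteMeasureOnCompacts μ] {s t : Set X} {f : X → E}
    (hf : ContinuousOn f s) (hs : IsCompact s) (ht : MeasurableSet t) (hts : t ⊆ s)
    (p : ENNReal) : MemLp f p (μ.restrict t) := by
  have : IsFiniteMeasure (μ.restrict t) :=
    isFiniteMeasure_restrict.2 ((measure_mono hts).trans_lt hs.measure_lt_top).ne
  obtain ⟨C, hC⟩ := hs.exists_bound_of_continuousOn hf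
  exact .of_bound (hf.aestronglyMeasurable_of_subset_isCompact hs ht hts) C
    (ae_restrict_of_forall_mem ht fun x hx => hC x (hts hx))

theorem fourierCoeffOn_add {E : Type*} [NormedAddCommGroup E] [NormedSpace ℂ E] [CompleteSpace E]
    {a b : ℝ} (hab : a < b) {f g : ℝ → E}
    (hf : IntervalIntegrable f volume a b) (hg : IntervalIntegrable g volume a b) (n : ℤ) :
    fourierCoeffOn hab (fun x => f x + g x) n =
      fourierCoeffOn hab f n + fourierCoeffOn hab g n := by
  have hfourier : ContinuousOn (fun x : ℝ => fourier (-n) (x : AddCircle (b - a))) [[a, b]] :=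
    ((map_continuous _).comp (AddCircle.continuous_mk' _)).continuousOn
  simp only [fourierCoeffOn_eq_integral, smul_add]
  rw [intervalIntegral.integral_add (hf.continuousOn_smul hfourier)
    (hg.continuousOn_smul hfourier), smul_add]

theorem fourierCoeffOn_deriv_of_periodic {a b : ℝ} (hab : a < b) {f f' : ℝ → ℂ}
    (hf : ∀ x ∈ [[a, b]], HasDerivAt f (f' x) x) (hf' : IntervalIntegrable f' volume a b)
    (hper : f b = f a) (n : ℤ) :
    fourierCoeffOn hab f' n = 2 * Real.pi * I * n / (b - a) * fourierCoeffOn hab f n := by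
  rcases eq_or_ne n 0 with rfl | hn
  · simp [fourierCoeffOn_eq_integral, intervalIntegral.integral_eq_sub_of_hasDerivAt hf hf', hper]
  · have h := fourierCoeffOn_of_hasDerivAt hab hn hf hf'
    rw [hper, sub_self, mul_zero, zero_sub] at h
    have hba : ((b - a : ℝ) : ℂ) ≠ 0 := ofReal_ne_zero.2 (sub_pos.2 hab).ne'
    have hpi : (Real.pi : ℂ) ≠ 0 := ofReal_ne_zero.2 Real.pi_ne_zero
    have hn' : (n : ℂ) ≠ 0 := Int.cast_ne_zero.2 hn
    rw [h]
    push_cast at hba ⊢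
    field_simp

noncomputable def phaseTwist (β a x : ℝ) : ℂ := exp (((a - x) * β : ℝ) * I)

theorem norm_phaseTwist (β a x : ℝ) : ‖phaseTwist β a x‖ = 1 := norm_exp_ofReal_mul_I _

theorem hasDerivAt_phaseTwist (β a x : ℝ) :
    HasDerivAt (phaseTwist β a) (-(β * I) * phaseTwist β a x) x := by
  have h : HasDerivAt (fun y : ℝ => (((a - y) * β : ℝ) : ℂ) * I) (-(β * I)) x := by
    simpa using (((hasDerivAt_id x).const_sub a).mul_const β).ofReal_comp.mul_const I
  exact h.cexp.congr_deriv (by rw [phaseTwist, mul_comm])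

theorem continuous_phaseTwist (β a : ℝ) : Continuous (phaseTwist β a) :=
  continuous_iff_continuousAt.2 fun x => (hasDerivAt_phaseTwist β a x).continuousAt

theorem phaseTwist_mul_exp (β a b : ℝ) :
    phaseTwist β a b * exp (((b - a) * β : ℝ) * I) = 1 := by
  rw [phaseTwist, ← exp_add, ← add_mul, ← ofReal_add]
  ring_nf
  simp

theorem fourierCoeffOn_phaseTwist_mul_deriv {a b β : ℝ} (hab : a < b) {u u' : ℝ → ℂ}
    (hu : ∀ x ∈ Icc a b, HasDerivAt u (u' x) x) (hu' : IntervalIntegrable u' volume a b)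
    (hbc : u b = exp (((b - a) * β : ℝ) * I) * u a) (n : ℤ) :
    fourierCoeffOn hab (fun x => phaseTwist β a x * u' x) n =
      ((2 * Real.pi * n / (b - a) + β : ℝ) : ℂ) * I *
        fourierCoeffOn hab (fun x => phaseTwist β a x * u x) n := by
  set v := fun x => phaseTwist β a x * u x
  set g := fun x => phaseTwist β a x * u' x
  have hv : ∀ x ∈ Icc a b, HasDerivAt v (g x + -(β * I) * v x) x := fun x hx =>
    ((hasDerivAt_phaseTwist β a x).mul (hu x hx)).congr_deriv (by ring)
  rw [← uIcc_of_le hab.le] at hv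
  have hper : v b = v a := by
    simp only [v, hbc, ← mul_assoc, phaseTwist_mul_exp]
    simp [phaseTwist]
  have hg : IntervalIntegrable g volume a b :=
    hu'.continuousOn_mul (continuous_phaseTwist β a).continuousOn
  have hcv : IntervalIntegrable (fun x => -(β * I) * v x) volume a b :=
    (ContinuousOn.intervalIntegrable fun x hx =>
      (hv x hx).continuousAt.continuousWithinAt).const_mul _
  have h := fourierCoeffOn_deriv_of_periodic hab hv (hg.add hcv) hper n
  rw [fourierCoeffOn_add hab hg hcv, fourierCoeffOn.const_mul] at h
  push_cast
  linear_combination h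

theorem hasSum_sq_fourierCoeffOn_phaseTwist_mul {a b : ℝ} (hab : a < b) (β : ℝ) {f : ℝ → ℂ}
    (hf : ContinuousOn f (Icc a b)) :
    HasSum (fun n => ‖fourierCoeffOn hab (fun x => phaseTwist β a x * f x) n‖ ^ 2)
      ((b - a)⁻¹ * ∫ x in a..b, ‖f x‖ ^ 2) := by
  have hL2 : MemLp (fun x => phaseTwist β a x * f x) 2 (volume.restrict (Ioc a b)) :=
    ((continuous_phaseTwist β a).continuousOn.mul hf).memLp_restrict_of_subset_isCompact
      isCompact_Icc measurableSet_Ioc Ioc_subset_Icc_self 2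
  simpa [norm_phaseTwist] using hasSum_sq_fourierCoeffOn hab hL2

theorem poincare_twisted {a b β μ : ℝ} (hab : a < b)
    (hμ : ∀ n : ℤ, μ ≤ (2 * Real.pi * n / (b - a) + β) ^ 2) {u u' : ℝ → ℂ}
    (hu : ∀ x ∈ Icc a b, HasDerivAt u (u' x) x) (hu' : ContinuousOn u' (Icc a b))
    (hbc : u b = exp (((b - a) * β : ℝ) * I) * u a) :
    μ * ∫ x in a..b, ‖u x‖ ^ 2 ≤ ∫ x in a..b, ‖u' x‖ ^ 2 := by
  have hcoeff : ∀ n, μ * ‖fourierCoeffOn hab (fun x => phaseTwist β a x * u x) n‖ ^ 2 ≤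
      ‖fourierCoeffOn hab (fun x => phaseTwist β a x * u' x) n‖ ^ 2 := fun n => by
    rw [fourierCoeffOn_phaseTwist_mul_deriv hab hu (hu'.intervalIntegrable_of_Icc hab.le) hbc,
      norm_mul, norm_mul, norm_I, mul_one, norm_real, Real.norm_eq_abs, mul_pow, sq_abs]
    exact mul_le_mul_of_nonneg_right (hμ n) (sq_nonneg _)
  have hsum := hasSum_le hcoeff
    ((hasSum_sq_fourierCoeffOn_phaseTwist_mul hab β fun x hx =>
      (hu x hx).continuousAt.continuousWithinAt).mul_left μ)
    (hasSum_sq_fourierCoeffOn_phaseTwist_mul hab β hu')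
  rw [mul_left_comm] at hsum
  exact le_of_mul_le_mul_left hsum (inv_pos.2 (sub_pos.2 hab))

theorem sq_le_sq_two_mul_intCast_add {β : ℝ} (hβ : |β| ≤ 1) (n : ℤ) :
    β ^ 2 ≤ (2 * n + β) ^ 2 := by
  obtain ⟨hβl, hβr⟩ := abs_le.1 hβ
  rcases lt_trichotomy n 0 with hn | rfl | hn
  · have : (n : ℝ) ≤ -1 := by exact_mod_cast Int.le_sub_one_of_lt hn
    nlinarith
  · simp
  · have : (1 : ℝ) ≤ n := by exact_mod_cast hn
    nlinarith

/-- **Poincaré inequality with twisted (semi-periodic) boundary conditions**: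
if `u ∈ H¹([0,π]; ℂ)` satisfies `u(π) = e^{iπβ₀} u(0)` and `|β₀| ≤ 1`, then
`∫_0^π |u'|² ≥ β₀² ∫_0^π |u|²`. -/
theorem poincare_twisted_halfcircle (β₀ : ℝ) (hβ : |β₀| ≤ 1)
    (u u' : ℝ → ℂ)
    (hu : ∀ x ∈ Set.Icc (0 : ℝ) Real.pi, HasDerivAt u (u' x) x)
    (hu' : ContinuousOn u' (Set.Icc 0 Real.pi))
    (hbc : u Real.pi = Complex.exp ((Real.pi * β₀ : ℝ) * Complex.I) * u 0) :
    ∫ x in (0 : ℝ)..Real.pi, ‖u' x‖ ^ 2 ≥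
      β₀ ^ 2 * ∫ x in (0 : ℝ)..Real.pi, ‖u x‖ ^ 2 := by
  have hμ (n : ℤ) : β₀ ^ 2 ≤ (2 * Real.pi * n / (Real.pi - 0) + β₀) ^ 2 := by
    rw [sub_zero, mul_div_right_comm, mul_div_cancel_right₀ _ Real.pi_ne_zero]
    exact sq_le_sq_two_mul_intCast_add hβ n
  exact poincare_twisted Real.pi_pos hμ hu hu' (by rwa [sub_zero])
end

section
/- Let Q₀ ⊆ ℝ^d be a cube, Λ > 0, and 0 ≤ f ∈ L¹(Q₀) with ∫_{Q₀} f ≥ Λ. Then Q₀ can be partitioned into countably many disjoint sub-cubes Q such that ∫_Q f ≤ Λ for each Q, and for all α, β > 0 and γ ≥ 0: ∑_Q |Q|^{-α} [ (∫_Q f)^β − (Λ^{β−γ}/C_{d,α,β}) (∫_Q f)^γ ] ≥ 0, with C_{d,α,β} = 2^{d(α+β+1)}/(2^{dα} − 1). -/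
open MeasureTheory

/-- A half-open `d`-cube in `ℝ^d` with lower corner `c` and side length `ℓ`. -/
def halfOpenCube {d : ℕ} (c : EuclideanSpace ℝ (Fin d)) (ℓ : ℝ) :
    Set (EuclideanSpace ℝ (Fin d)) :=
  {x | ∀ m, x m ∈ Set.Ico (c m) (c m + ℓ)}

/-! Cubes of mass above `Λ` are halved in every direction until the pieces are light; absolute
continuity of the integral makes this stop at a bounded generation. A cube that was split had
mass above `Λ`, so one of its `2^d` children carries mass above `Λ / 2^d`. Along the tree, the
weight `|Q|^{-α}` grows by `2^{dα}` per generation, and induction shows that the leaves below a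
split cube `P` contribute at least `|P|^{-α} (Λ / 2^d)^β`: the heavy child pays for the negative
terms `-Λ^β / C` of all its siblings, and `C = C_{d,α,β}` is exactly the constant making this
balance. Since every leaf has mass at most `Λ`, the case `γ > 0` reduces to `γ = 0`. -/

open Set Filter Topology Function

theorem List.Pairwise.pairwiseDisjoint_getElem {α β : Type*} {F : α → Set β} {l : List α}
    (h : l.Pairwise (_root_.Disjoint on F)) :
    (univ : Set (Fin l.length)).PairwiseDisjoint fun i => F l[i] := by
  intro i _ j _ hij
  rcases lt_or_gt_of_ne hij with hlt | hlt
  · exact List.pairwise_iff_get.1 h i j hlt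
  · exact (List.pairwise_iff_get.1 h j i hlt).symm

theorem List.iUnion_getElem {α β : Type*} (F : α → Set β) (l : List α) :
    ⋃ i : Fin l.length, F l[i] = ⋃ q ∈ l, F q := by
  ext x
  simp [List.mem_iff_getElem, Fin.exists_iff]

section StoppedLeaves

variable {X ι : Type*} [Fintype ι]

-- The fuel `k` caps the depth: leaves at depth `k` may still have mass above `Λ`.
noncomputable def stoppedLeaves (child : X → ι → X) (m : X → ℝ) (Λ : ℝ) : ℕ → X → List X
  | 0, p => [p]
  | k + 1, p =>
    if m p ≤ Λ then [p] else (Finset.univ : Finset ι).toList.flatMap fun i =>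
      stoppedLeaves child m Λ k (child p i)

variable {child : X → ι → X} {m : X → ℝ} {Λ : ℝ}

theorem stoppedLeaves_of_le {k : ℕ} {p : X} (h : m p ≤ Λ) :
    stoppedLeaves child m Λ k p = [p] := by
  cases k <;> simp [stoppedLeaves, h]

theorem stoppedLeaves_succ_of_lt {k : ℕ} {p : X} (h : Λ < m p) :
    stoppedLeaves child m Λ (k + 1) p =
      (Finset.univ : Finset ι).toList.flatMap fun i => stoppedLeaves child m Λ k (child p i) := by
  simp [stoppedLeaves, h.not_ge]

theorem mem_stoppedLeaves_succ_of_lt {k : ℕ} {p q : X} (h : Λ < m p) {i : ι}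
    (hq : q ∈ stoppedLeaves child m Λ k (child p i)) : q ∈ stoppedLeaves child m Λ (k + 1) p := by
  rw [stoppedLeaves_succ_of_lt h, List.mem_flatMap]
  exact ⟨i, Finset.mem_toList.2 (Finset.mem_univ i), hq⟩

theorem sum_map_stoppedLeaves_succ_of_lt {M : Type*} [AddCommMonoid M] (F : X → M) {k : ℕ}
    {p : X} (h : Λ < m p) :
    ((stoppedLeaves child m Λ (k + 1) p).map F).sum =
      ∑ i, ((stoppedLeaves child m Λ k (child p i)).map F).sum := by
  rw [stoppedLeaves_succ_of_lt h, List.map_flatMap, List.flatMap_def, List.sum_flatten,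
    List.map_map, Finset.sum_map_toList]
  rfl

theorem biUnion_stoppedLeaves {Y : Type*} {cell : X → Set Y}
    (hcell : ∀ p, ⋃ i, cell (child p i) = cell p) (k : ℕ) (p : X) :
    ⋃ q ∈ stoppedLeaves child m Λ k p, cell q = cell p := by
  induction k generalizing p with
  | zero => simp [stoppedLeaves]
  | succ k ih =>
    rcases le_or_gt (m p) Λ with h | h
    · simp [stoppedLeaves_of_le h]
    · simp only [stoppedLeaves_succ_of_lt h, List.mem_flatMap, Finset.mem_toList,
        Finset.mem_univ, true_and, iUnion_exists, iUnion_comm (ι := X), ih, hcell]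

theorem subset_of_mem_stoppedLeaves {Y : Type*} {cell : X → Set Y}
    (hcell : ∀ p, ⋃ i, cell (child p i) = cell p) {k : ℕ} {p q : X}
    (hq : q ∈ stoppedLeaves child m Λ k p) : cell q ⊆ cell p :=
  (biUnion_stoppedLeaves hcell k p).subst (subset_biUnion_of_mem (u := cell) hq)

theorem pairwise_disjoint_stoppedLeaves {Y : Type*} {cell : X → Set Y}
    (hcell : ∀ p, ⋃ i, cell (child p i) = cell p)
    (hdisj : ∀ p, Pairwise (Disjoint on fun i => cell (child p i))) (k : ℕ) (p : X) :
    (stoppedLeaves child m Λ k p).Pairwise (Disjoint on cell) := by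
  induction k generalizing p with
  | zero => simp [stoppedLeaves]
  | succ k ih =>
    rcases le_or_gt (m p) Λ with h | h
    · simp [stoppedLeaves_of_le h]
    rw [stoppedLeaves_succ_of_lt h, List.pairwise_flatMap]
    refine ⟨fun i _ => ih _, (Finset.nodup_toList _).pairwise_of_forall_ne ?_⟩
    intro i _ j _ hij q hq q' hq'
    exact (hdisj p hij).mono (subset_of_mem_stoppedLeaves hcell hq)
      (subset_of_mem_stoppedLeaves hcell hq')

theorem le_of_mem_stoppedLeaves {gen : X → ℕ} (hgen : ∀ p i, gen (child p i) = gen p + 1)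
    {n : ℕ} (hfine : ∀ q, n ≤ gen q → m q ≤ Λ) {k : ℕ} {p q : X}
    (hq : q ∈ stoppedLeaves child m Λ k p) (hk : n ≤ gen p + k) : m q ≤ Λ := by
  induction k generalizing p with
  | zero => simp_all [stoppedLeaves]
  | succ k ih =>
    rcases le_or_gt (m p) Λ with h | h
    · rw [stoppedLeaves_of_le h, List.mem_singleton] at hq
      exact hq ▸ h
    · rw [stoppedLeaves_succ_of_lt h, List.mem_flatMap] at hq
      obtain ⟨i, -, hq⟩ := hq
      exact ih hq (by rw [hgen]; omega)

section Weighted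

variable {φ : ℝ → ℝ} {w : X → ℝ} {A c : ℝ}

theorem mul_min_sub_le_sum_stoppedLeaves {k : ℕ} {p : X} (b : ℝ) (hw0 : 0 ≤ w p) (hc : 0 ≤ c)
    (hheavy : Λ < m p → w p * b ≤ ((stoppedLeaves child m Λ k p).map
      fun q => w q * (φ (m q) - c)).sum) :
    w p * (min (φ (m p)) b - c) ≤
      ((stoppedLeaves child m Λ k p).map fun q => w q * (φ (m q) - c)).sum := by
  rcases le_or_gt (m p) Λ with h | h
  · simp only [stoppedLeaves_of_le h, List.map_singleton, List.sum_singleton]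
    gcongr
    exact min_le_left _ _
  · refine le_trans ?_ (hheavy h)
    gcongr
    linarith [min_le_right (φ (m p)) b]

-- A child of mass above `Λ / N` contributes `φ (Λ / N)` at weight `A * w p`; `hcA` says that
-- this pays for the `-c` of all `N` children.
theorem mul_le_sum_stoppedLeaves_of_lt [Nonempty ι] (hadd : ∀ p, m p = ∑ i, m (child p i))
    (hm0 : ∀ p, 0 ≤ m p) (hw : ∀ p i, w (child p i) = A * w p) (hw0 : ∀ p, 0 ≤ w p)
    (hφ : MonotoneOn φ (Ici 0)) (hφ0 : 0 ≤ φ 0) (hΛ : 0 ≤ Λ) (hc : 0 ≤ c)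
    (hcA : A * Fintype.card ι * c ≤ (A - 1) * φ (Λ / Fintype.card ι)) (k : ℕ) (p : X)
    (hlight : ∀ q ∈ stoppedLeaves child m Λ k p, m q ≤ Λ) (hp : Λ < m p) :
    w p * φ (Λ / Fintype.card ι) ≤
      ((stoppedLeaves child m Λ k p).map fun q => w q * (φ (m q) - c)).sum := by
  induction k generalizing p with
  | zero => exact absurd (hlight p (List.mem_singleton_self p)) hp.not_ge
  | succ k ih =>
    set N : ℝ := (Fintype.card ι : ℝ)
    set b := φ (Λ / N)
    have hN : 0 < N := by simp [N, Fintype.card_pos]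
    have hφnn : ∀ t, 0 ≤ t → 0 ≤ φ t := fun t ht => hφ0.trans (hφ self_mem_Ici ht ht)
    have hb : 0 ≤ b := hφnn _ (by positivity)
    have hchild : ∀ i, w (child p i) * (min (φ (m (child p i))) b - c) ≤
        ((stoppedLeaves child m Λ k (child p i)).map fun q => w q * (φ (m q) - c)).sum :=
      fun i => mul_min_sub_le_sum_stoppedLeaves b (hw0 _) hc
        (ih _ fun q hq => hlight q (mem_stoppedLeaves_succ_of_lt hp hq))
    obtain ⟨i₀, -, hi₀⟩ : ∃ i ∈ Finset.univ, Λ / N < m (child p i) := by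
      refine Finset.exists_lt_of_sum_lt ?_
      rw [Finset.sum_const, Finset.card_univ, nsmul_eq_mul, mul_div_cancel₀ _ hN.ne', ← hadd]
      exact hp
    have hmin : b ≤ ∑ i, min (φ (m (child p i))) b := by
      calc b = min (φ (m (child p i₀))) b :=
            (min_eq_right (hφ (mem_Ici.2 (by positivity)) (hm0 _) hi₀.le)).symm
        _ ≤ ∑ i, min (φ (m (child p i))) b :=
          Finset.single_le_sum (fun i _ => le_min (hφnn _ (hm0 _)) hb) (Finset.mem_univ i₀)
    have hAw : 0 ≤ A * w p := hw p i₀ ▸ hw0 _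
    rw [sum_map_stoppedLeaves_succ_of_lt _ hp]
    calc w p * b ≤ A * w p * (b - N * c) := by
          nlinarith [mul_le_mul_of_nonneg_left hcA (hw0 p)]
      _ ≤ A * w p * (∑ i, min (φ (m (child p i))) b - N * c) := by gcongr
      _ = ∑ i, w (child p i) * (min (φ (m (child p i))) b - c) := by
        simp only [hw, ← Finset.mul_sum, Finset.sum_sub_distrib, Finset.sum_const,
          Finset.card_univ, nsmul_eq_mul, N]
      _ ≤ _ := Finset.sum_le_sum fun i _ => hchild i

theorem sum_stoppedLeaves_nonneg [Nonempty ι] (hadd : ∀ p, m p = ∑ i, m (child p i))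
    (hm0 : ∀ p, 0 ≤ m p) (hw : ∀ p i, w (child p i) = A * w p) (hw0 : ∀ p, 0 ≤ w p)
    (hφ : MonotoneOn φ (Ici 0)) (hφ0 : 0 ≤ φ 0) (hΛ : 0 ≤ Λ) (hc : 0 ≤ c) (hA : 0 < A)
    (hcA : A * Fintype.card ι * c ≤ (A - 1) * φ (Λ / Fintype.card ι)) (k : ℕ) (p : X)
    (hlight : ∀ q ∈ stoppedLeaves child m Λ k p, m q ≤ Λ) (hp : Λ ≤ m p) :
    0 ≤ ((stoppedLeaves child m Λ k p).map fun q => w q * (φ (m q) - c)).sum := by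
  set N : ℝ := (Fintype.card ι : ℝ)
  have hN : 1 ≤ N := by simp [N, Nat.one_le_iff_ne_zero, Fintype.card_ne_zero]
  have hΛN : Λ / N ∈ Ici 0 := mem_Ici.2 (by positivity)
  have hb : φ (Λ / N) ≤ φ (m p) := hφ hΛN (hΛ.trans hp) ((div_le_self hΛ hN).trans hp)
  have hcb : c ≤ φ (Λ / N) := by
    have hb0 : 0 ≤ φ (Λ / N) := hφ0.trans (hφ self_mem_Ici hΛN (mem_Ici.1 hΛN))
    have hAc : A * c ≤ A * N * c := by nlinarith [mul_nonneg hA.le hc]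
    exact le_of_mul_le_mul_left (by linarith) hA
  refine le_trans ?_ (mul_min_sub_le_sum_stoppedLeaves (φ (Λ / N)) (hw0 p) hc
    (mul_le_sum_stoppedLeaves_of_lt hadd hm0 hw hw0 hφ hφ0 hΛ hc hcA k p hlight))
  rw [min_eq_right hb]
  exact mul_nonneg (hw0 p) (sub_nonneg.2 hcb)

end Weighted

end StoppedLeaves

section Cubes

variable {d : ℕ}

theorem measurableSet_halfOpenCube (c : EuclideanSpace ℝ (Fin d)) (ℓ : ℝ) :
    MeasurableSet (halfOpenCube c ℓ) := by
  have : halfOpenCube c ℓ =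
      ⋂ i, (fun x : EuclideanSpace ℝ (Fin d) => x i) ⁻¹' Ico (c i) (c i + ℓ) := by
    ext x; simp [halfOpenCube]
  rw [this]
  exact MeasurableSet.iInter fun i =>
    ((measurable_pi_apply i).comp (WithLp.measurable_ofLp 2 _)) measurableSet_Ico

theorem volume_halfOpenCube (c : EuclideanSpace ℝ (Fin d)) {ℓ : ℝ} (hℓ : 0 ≤ ℓ) :
    volume (halfOpenCube c ℓ) = ENNReal.ofReal (ℓ ^ d) := by
  have : halfOpenCube c ℓ = (MeasurableEquiv.toLp 2 (Fin d → ℝ)).symm ⁻¹'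
      (univ.pi fun i => Ico (c i) (c i + ℓ)) := by
    ext x; simp [halfOpenCube, MeasurableEquiv.toLp_symm_apply]
  rw [this, (EuclideanSpace.volume_preserving_symm_measurableEquiv_toLp (Fin d)).measure_preimage
    (MeasurableSet.univ_pi fun _ => measurableSet_Ico).nullMeasurableSet, volume_pi_pi]
  simp [Real.volume_Ico, ← ENNReal.ofReal_pow hℓ]

noncomputable def childCorner (c : EuclideanSpace ℝ (Fin d)) (ℓ : ℝ) (ε : Fin d → Bool) :
    EuclideanSpace ℝ (Fin d) :=
  WithLp.toLp 2 fun i => c i + if ε i then ℓ / 2 else 0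

theorem iUnion_halfOpenCube_childCorner (c : EuclideanSpace ℝ (Fin d)) (ℓ : ℝ) :
    ⋃ ε, halfOpenCube (childCorner c ℓ ε) (ℓ / 2) = halfOpenCube c ℓ := by
  refine Subset.antisymm (iUnion_subset fun ε x hx i => ?_) fun x hx => ?_
  · have := hx i
    simp only [childCorner, PiLp.toLp_apply, mem_Ico] at this ⊢
    split at this <;> constructor <;> linarith [this.1, this.2]
  · refine mem_iUnion.2 ⟨fun i => decide (c i + ℓ / 2 ≤ x i), fun i => ?_⟩
    have := hx i
    simp only [childCorner, PiLp.toLp_apply, mem_Ico, decide_eq_true_eq] at this ⊢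
    split_ifs with h <;> constructor <;> linarith [this.1, this.2]

theorem pairwise_disjoint_halfOpenCube_childCorner (c : EuclideanSpace ℝ (Fin d)) (ℓ : ℝ) :
    Pairwise (Disjoint on fun ε => halfOpenCube (childCorner c ℓ ε) (ℓ / 2)) := by
  intro ε ε' hne
  obtain ⟨i, hi⟩ := Function.ne_iff.1 hne
  refine disjoint_left.2 fun x hx hx' => ?_
  have h := hx i
  have h' := hx' i
  simp only [childCorner, PiLp.toLp_apply, mem_Ico] at h h'
  cases hε : ε i <;> cases hε' : ε' i <;> simp_all <;> linarith

end Cubes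

theorem rpow_neg_div_two_pow {ℓ : ℝ} (hℓ : 0 ≤ ℓ) (d : ℕ) (α : ℝ) :
    ((ℓ / 2) ^ d) ^ (-α) = 2 ^ ((d : ℝ) * α) * (ℓ ^ d) ^ (-α) := by
  rw [div_pow, Real.div_rpow (by positivity) (by positivity), ← Real.rpow_natCast 2 d,
    ← Real.rpow_mul zero_le_two, mul_neg, Real.rpow_neg zero_le_two, div_inv_eq_mul, mul_comm]

noncomputable def coveringConstant (d : ℕ) (α β : ℝ) : ℝ :=
  2 ^ ((d : ℝ) * (α + β + 1)) / (2 ^ ((d : ℝ) * α) - 1)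

theorem coveringConstant_nonneg (d : ℕ) {α : ℝ} (hα : 0 ≤ α) (β : ℝ) :
    0 ≤ coveringConstant d α β :=
  div_nonneg (by positivity) (sub_nonneg.2 (Real.one_le_rpow one_le_two (by positivity)))

theorem mul_div_coveringConstant (d : ℕ) (α β : ℝ) {Λ : ℝ} (hΛ : 0 ≤ Λ) :
    2 ^ ((d : ℝ) * α) * 2 ^ d * (Λ ^ β / coveringConstant d α β) =
      (2 ^ ((d : ℝ) * α) - 1) * (Λ / 2 ^ d) ^ β := by
  have hsplit : (2 : ℝ) ^ ((d : ℝ) * (α + β + 1)) =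
      2 ^ ((d : ℝ) * α) * (2 ^ d) ^ β * 2 ^ d := by
    rw [mul_add, mul_add, mul_one, Real.rpow_add two_pos, Real.rpow_add two_pos,
      Real.rpow_natCast, ← Real.rpow_natCast 2 d, ← Real.rpow_mul zero_le_two]
  rw [coveringConstant, hsplit, Real.div_rpow hΛ (by positivity)]
  rcases eq_or_ne ((2 : ℝ) ^ ((d : ℝ) * α) - 1) 0 with h | h
  · simp [h]
  · field_simp

theorem rpow_sub_div_mul_rpow_le {Λ t C : ℝ} (hΛ : 0 < Λ) (ht : 0 ≤ t) (htΛ : t ≤ Λ) (hC : 0 ≤ C)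
    (β : ℝ) {γ : ℝ} (hγ : 0 ≤ γ) : Λ ^ (β - γ) / C * t ^ γ ≤ Λ ^ β / C := by
  rw [div_mul_eq_mul_div]
  gcongr
  calc Λ ^ (β - γ) * t ^ γ ≤ Λ ^ (β - γ) * Λ ^ γ := by gcongr
    _ = Λ ^ β := by rw [← Real.rpow_add hΛ, sub_add_cancel]

section Dyadic

variable {d : ℕ} (L : ℝ)

def dyadicCube (p : EuclideanSpace ℝ (Fin d) × ℕ) : Set (EuclideanSpace ℝ (Fin d)) :=
  halfOpenCube p.1 (L / 2 ^ p.2)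

noncomputable def dyadicChild (p : EuclideanSpace ℝ (Fin d) × ℕ) (ε : Fin d → Bool) :
    EuclideanSpace ℝ (Fin d) × ℕ :=
  (childCorner p.1 (L / 2 ^ p.2) ε, p.2 + 1)

theorem iUnion_dyadicCube_dyadicChild (p : EuclideanSpace ℝ (Fin d) × ℕ) :
    ⋃ ε, dyadicCube L (dyadicChild L p ε) = dyadicCube L p := by
  simp only [dyadicCube, dyadicChild, pow_succ, ← div_div, iUnion_halfOpenCube_childCorner]

theorem pairwise_disjoint_dyadicCube_dyadicChild (p : EuclideanSpace ℝ (Fin d) × ℕ) :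
    Pairwise (Disjoint on fun ε => dyadicCube L (dyadicChild L p ε)) := by
  simpa only [dyadicCube, dyadicChild, pow_succ, ← div_div] using
    pairwise_disjoint_halfOpenCube_childCorner p.1 (L / 2 ^ p.2)

theorem setIntegral_dyadicCube_eq_sum {μ : Measure (EuclideanSpace ℝ (Fin d))}
    {f : EuclideanSpace ℝ (Fin d) → ℝ} (hf : Integrable f μ) (p : EuclideanSpace ℝ (Fin d) × ℕ) :
    ∫ x in dyadicCube L p, f x ∂μ = ∑ ε, ∫ x in dyadicCube L (dyadicChild L p ε), f x ∂μ := by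
  rw [← iUnion_dyadicCube_dyadicChild, integral_iUnion
    (s := fun ε => dyadicCube L (dyadicChild L p ε)) (fun _ => measurableSet_halfOpenCube _ _)
    (pairwise_disjoint_dyadicCube_dyadicChild L p) hf.integrableOn, tsum_fintype]

theorem tendsto_volume_dyadicCube (hd : d ≠ 0) (hL : 0 ≤ L) :
    Tendsto (fun p : EuclideanSpace ℝ (Fin d) × ℕ => volume (dyadicCube L p))
      (comap Prod.snd atTop) (𝓝 0) := by
  have hside : Tendsto (fun n : ℕ => L / 2 ^ n) atTop (𝓝 0) := by
    simpa [div_eq_mul_inv] using (tendsto_pow_atTop_nhds_zero_of_lt_one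
      (r := (2 : ℝ)⁻¹) (by norm_num) (by norm_num)).const_mul L
  have hvol : Tendsto (fun n : ℕ => ENNReal.ofReal ((L / 2 ^ n) ^ d)) atTop (𝓝 0) := by
    simpa [zero_pow hd] using ENNReal.tendsto_ofReal (hside.pow d)
  refine (hvol.comp tendsto_comap).congr fun p => ?_
  exact (volume_halfOpenCube p.1 (by positivity)).symm

theorem exists_setIntegral_dyadicCube_le (hd : d ≠ 0) (hL : 0 ≤ L)
    {μ : Measure (EuclideanSpace ℝ (Fin d))} (hμ : μ ≤ volume)
    {f : EuclideanSpace ℝ (Fin d) → ℝ} (hf : Integrable f μ) {Λ : ℝ} (hΛ : 0 < Λ) :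
    ∃ K, ∀ p : EuclideanSpace ℝ (Fin d) × ℕ, K ≤ p.2 → ∫ x in dyadicCube L p, f x ∂μ ≤ Λ := by
  have hμ0 : Tendsto (fun p => μ (dyadicCube L p)) (comap Prod.snd atTop) (𝓝 0) :=
    tendsto_of_tendsto_of_tendsto_of_le_of_le tendsto_const_nhds (tendsto_volume_dyadicCube L hd hL)
      (fun _ => bot_le) fun _ => hμ _
  obtain ⟨K, hK⟩ := eventually_atTop.1 <| eventually_comap.1 <|
    (hf.tendsto_setIntegral_nhds_zero hμ0).eventually (ge_mem_nhds hΛ)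
  exact ⟨K, fun p hp => hK p.2 hp p rfl⟩

theorem sum_stoppedLeaves_dyadicChild_nonneg {m : EuclideanSpace ℝ (Fin d) × ℕ → ℝ}
    (hadd : ∀ p, m p = ∑ ε, m (dyadicChild L p ε)) (hm0 : ∀ p, 0 ≤ m p) (hL : 0 ≤ L) {Λ : ℝ}
    (hΛ : 0 ≤ Λ) {α β : ℝ} (hα : 0 ≤ α) (hβ : 0 ≤ β) (K : ℕ) (p : EuclideanSpace ℝ (Fin d) × ℕ)
    (hlight : ∀ q ∈ stoppedLeaves (dyadicChild L) m Λ K p, m q ≤ Λ) (hp : Λ ≤ m p) :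
    0 ≤ ((stoppedLeaves (dyadicChild L) m Λ K p).map fun q =>
      ((L / 2 ^ q.2) ^ d) ^ (-α) * (m q ^ β - Λ ^ β / coveringConstant d α β)).sum :=
  sum_stoppedLeaves_nonneg (φ := fun t => t ^ β) hadd hm0
    (fun p _ => by simpa only [dyadicChild, pow_succ, ← div_div] using
      rpow_neg_div_two_pow (by positivity) d α)
    (fun p => Real.rpow_nonneg (by positivity) _)
    (Real.monotoneOn_rpow_Ici_of_exponent_nonneg hβ) (Real.rpow_nonneg le_rfl β) hΛ
    (div_nonneg (Real.rpow_nonneg hΛ β) (coveringConstant_nonneg d hα β)) (by positivity)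
    (by simpa using (mul_div_coveringConstant d α β hΛ).le) K p hlight hp

end Dyadic

/-- **Covering lemma**: given a cube `Q₀ ⊆ ℝ^d`, `Λ > 0` and
`0 ≤ f ∈ L¹(Q₀)` with `∫_{Q₀} f ≥ Λ`, the cube `Q₀` can be partitioned into
finitely many disjoint sub-cubes `Q` with `∫_Q f ≤ Λ`, such that for all
`α, β > 0`, `γ ≥ 0`:
`∑_Q |Q|^{-α} [(∫_Q f)^β − (Λ^{β-γ}/C_{d,α,β})(∫_Q f)^γ] ≥ 0`,
where `C_{d,α,β} = 2^{d(α+β+1)}/(2^{dα}−1)`. -/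
theorem covering_lemma (d : ℕ) (hd : 1 ≤ d)
    (a : EuclideanSpace ℝ (Fin d)) (L : ℝ) (hL : 0 < L)
    (Λ : ℝ) (hΛ : 0 < Λ)
    (f : EuclideanSpace ℝ (Fin d) → ℝ)
    (hf0 : ∀ x, 0 ≤ f x)
    (hfint : IntegrableOn f (halfOpenCube a L))
    (hmass : Λ ≤ ∫ x in halfOpenCube a L, f x) :
    ∃ (n : ℕ) (c : Fin n → EuclideanSpace ℝ (Fin d)) (ℓ : Fin n → ℝ),
      (∀ i, 0 < ℓ i) ∧
      (Set.univ.PairwiseDisjoint fun i : Fin n => halfOpenCube (c i) (ℓ i)) ∧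
      (⋃ i : Fin n, halfOpenCube (c i) (ℓ i)) = halfOpenCube a L ∧
      (∀ i, (∫ x in halfOpenCube (c i) (ℓ i), f x) ≤ Λ) ∧
      (∀ α β γ : ℝ, 0 < α → 0 < β → 0 ≤ γ →
        0 ≤ ∑ i : Fin n, (ℓ i ^ d) ^ (-α) *
          ((∫ x in halfOpenCube (c i) (ℓ i), f x) ^ β -
            Λ ^ (β - γ) /
              ((2 : ℝ) ^ ((d : ℝ) * (α + β + 1)) / ((2 : ℝ) ^ ((d : ℝ) * α) - 1)) *
            (∫ x in halfOpenCube (c i) (ℓ i), f x) ^ γ)) := by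
  -- Against `volume.restrict Q`, `f` is integrable and the masses are additive on every cube.
  let m p := ∫ x in dyadicCube L p, f x ∂(volume.restrict (halfOpenCube a L))
  have hroot : dyadicCube L (a, 0) = halfOpenCube a L := by simp [dyadicCube]
  have hmf : ∀ q, dyadicCube L q ⊆ halfOpenCube a L → m q = ∫ x in dyadicCube L q, f x :=
    fun q hq => by simp only [m, Measure.restrict_restrict_of_subset hq]
  obtain ⟨K, hK⟩ := exists_setIntegral_dyadicCube_le L (by omega) hL.le Measure.restrict_le_self
    hfint hΛ
  have hm0 : ∀ p, 0 ≤ m p := fun p =>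
    setIntegral_nonneg (measurableSet_halfOpenCube _ _) fun x _ => hf0 x
  set leaves := stoppedLeaves (dyadicChild L) m Λ K (a, 0) with hleaves
  have hm : ∀ q ∈ leaves, m q = ∫ x in dyadicCube L q, f x := fun q hq =>
    hmf q (hroot ▸ subset_of_mem_stoppedLeaves (iUnion_dyadicCube_dyadicChild L) hq)
  have hlight : ∀ q ∈ leaves, m q ≤ Λ := fun q hq =>
    le_of_mem_stoppedLeaves (gen := Prod.snd) (fun _ _ => rfl) hK hq (by simp)
  refine ⟨leaves.length, fun i => leaves[i].1, fun i => L / 2 ^ leaves[i].2, fun i => by positivity,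
    (pairwise_disjoint_stoppedLeaves (iUnion_dyadicCube_dyadicChild L)
      (pairwise_disjoint_dyadicCube_dyadicChild L) K _).pairwiseDisjoint_getElem,
    (List.iUnion_getElem (dyadicCube L) leaves).trans
      ((biUnion_stoppedLeaves (iUnion_dyadicCube_dyadicChild L) K _).trans hroot),
    fun i => hm _ (List.getElem_mem _) ▸ hlight _ (List.getElem_mem _), ?_⟩
  intro α β γ hα hβ hγ
  have hsum := sum_stoppedLeaves_dyadicChild_nonneg L (m := m)
    (setIntegral_dyadicCube_eq_sum L hfint) hm0 hL.le hΛ.le hα.le hβ.le K (a, 0) hlight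
    (by rwa [hmf _ hroot.le, hroot])
  rw [← hleaves, ← List.ofFn_getElem_eq_map, List.sum_ofFn] at hsum
  refine hsum.trans (Finset.sum_le_sum fun i _ => ?_)
  have hq : leaves[(i : ℕ)] ∈ leaves := List.getElem_mem _
  have hγ0 := rpow_sub_div_mul_rpow_le hΛ (hm0 _) (hlight _ hq)
    (coveringConstant_nonneg d hα.le β) β hγ
  rw [hm _ hq] at hγ0 ⊢
  exact mul_le_mul_of_nonneg_left (sub_le_sub_left hγ0 _) (Real.rpow_nonneg (by positivity) _)
end

section
/- For a normalized antisymmetric N-body state Ψ confined to a cube Q₀ (i.e. Ψ ∈ H¹ with support in Q₀^N, each particle subject to the local exclusion bound T^Q[Ψ] ≥ (π²/|Q|^{2/d})(∫_Q ϱ_Ψ − q)), partitioning Q₀ into M^d equal subcubes yields the bound T[Ψ] ≥ (π²/|Q₀|^{2/d})(N M² − q M^{d+2}) for every M ∈ ℕ; consequently the fermionic ground-state kinetic energy satisfies E₀ ≥ c_d π² q^{-2/d} N^{1+2/d} / |Q₀|^{2/d} with c_d = (d/(d+2))(2/(d+2))^{2/d} (up to adjusting for the integer rounding of the optimal M). 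-/
/-! Cut `Q₀` into the `M^d` half-open subcubes of side `L₀ / M`. Their indicators add up to the
indicator of `Q₀`, so the local kinetic energies add up to at most `T[Ψ]` and the local masses
to `N`; summing the local exclusion bound over the subcubes gives
`T[Ψ] ≥ (π² M² / L₀²)(N - q M^d)`. At `M^d = 2N/((d+2)q)` the bracket is `(d/(d+2)) N`, and
`M² = (M^d)^{2/d}` produces the constant `c_d q^{-2/d} N^{2/d}`. -/

open MeasureTheory

/-- A half-open `d`-cube in `ℝ^d` with lower corner `c` and side `ℓ`. -/
def hCube {d : ℕ} (c : EuclideanSpace ℝ (Fin d)) (ℓ : ℝ) :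
    Set (EuclideanSpace ℝ (Fin d)) :=
  {y | ∀ i, y i ∈ Set.Ico (c i) (c i + ℓ)}

/-- The gradient of `Ψ` with respect to the `j`-th particle coordinate. -/
noncomputable def gradPart {d N : ℕ}
    (Ψ : (Fin N → EuclideanSpace ℝ (Fin d)) → ℝ)
    (x : Fin N → EuclideanSpace ℝ (Fin d)) (j : Fin N) :
    EuclideanSpace ℝ (Fin d) →L[ℝ] ℝ :=
  fderiv ℝ (fun y => Ψ (Function.update x j y)) (x j)

/-- The local kinetic energy `T^Q[Ψ]` on the cube with corner `c`, side `ℓ`. -/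
noncomputable def localKinetic {d N : ℕ}
    (Ψ : (Fin N → EuclideanSpace ℝ (Fin d)) → ℝ)
    (c : EuclideanSpace ℝ (Fin d)) (ℓ : ℝ) : ℝ :=
  ∑ j : Fin N, ∫ x, ‖gradPart Ψ x j‖ ^ 2 *
    Set.indicator (hCube c ℓ) (fun _ => (1 : ℝ)) (x j)

/-- The local mass `∫_Q ϱ_Ψ` on the cube with corner `c`, side `ℓ`. -/
noncomputable def localMass {d N : ℕ}
    (Ψ : (Fin N → EuclideanSpace ℝ (Fin d)) → ℝ)
    (c : EuclideanSpace ℝ (Fin d)) (ℓ : ℝ) : ℝ :=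
  ∑ j : Fin N, ∫ x, (Ψ x) ^ 2 *
    Set.indicator (hCube c ℓ) (fun _ => (1 : ℝ)) (x j)

open Finset

def gridCorner {d M : ℕ} (a : EuclideanSpace ℝ (Fin d)) (ℓ : ℝ) (k : Fin d → Fin M) :
    EuclideanSpace ℝ (Fin d) :=
  WithLp.toLp 2 (fun i => a i + k i * ℓ)

theorem sum_indicator_Ico_grid (a : ℝ) {ℓ : ℝ} (hℓ : 0 ≤ ℓ) (M : ℕ) (t : ℝ) :
    ∑ m : Fin M, (Set.Ico (a + m * ℓ) (a + m * ℓ + ℓ)).indicator (fun _ => (1 : ℝ)) t =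
      (Set.Ico a (a + M * ℓ)).indicator (fun _ => 1) t := by
  induction M with
  | zero => simp
  | succ M ih =>
    have hM : (0 : ℝ) ≤ M * ℓ := by positivity
    rw [Fin.sum_univ_castSucc]
    simp only [Fin.val_castSucc, Fin.val_last]
    rw [ih, ← Set.indicator_union_of_notMem_inter fun h => Set.Ico_disjoint_Ico_same.le_bot h,
      Set.Ico_union_Ico_eq_Ico (by linarith) (by linarith)]
    push_cast
    ring_nf

theorem indicator_hCube {d : ℕ} (c : EuclideanSpace ℝ (Fin d)) (ℓ : ℝ)
    (y : EuclideanSpace ℝ (Fin d)) :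
    (hCube c ℓ).indicator (fun _ => (1 : ℝ)) y =
      ∏ i, (Set.Ico (c i) (c i + ℓ)).indicator (fun _ => 1) (y i) := by
  by_cases hy : y ∈ hCube c ℓ
  · rw [Set.indicator_of_mem hy]
    exact (prod_eq_one fun i _ => Set.indicator_of_mem (hy i) _).symm
  · obtain ⟨i, hi⟩ : ∃ i, y i ∉ Set.Ico (c i) (c i + ℓ) := by
      simpa [hCube] using hy
    rw [Set.indicator_of_notMem hy]
    exact (prod_eq_zero (mem_univ i) (Set.indicator_of_notMem hi _)).symm

theorem measurableSet_hCube {d : ℕ} (c : EuclideanSpace ℝ (Fin d)) (ℓ : ℝ) :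
    MeasurableSet (hCube c ℓ) := by
  simp only [hCube, Set.ofPred_forall]
  exact MeasurableSet.iInter fun i => measurableSet_Ico.preimage (by fun_prop)

theorem sum_indicator_hCube_grid {d : ℕ} (a : EuclideanSpace ℝ (Fin d)) {ℓ : ℝ} (hℓ : 0 ≤ ℓ)
    (M : ℕ) (y : EuclideanSpace ℝ (Fin d)) :
    ∑ k : Fin d → Fin M, (hCube (gridCorner a ℓ k) ℓ).indicator (fun _ => (1 : ℝ)) y =
      (hCube a (M * ℓ)).indicator (fun _ => 1) y := by
  simp only [indicator_hCube, gridCorner, ← sum_indicator_Ico_grid _ hℓ, Fintype.prod_sum]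

theorem integrable_mul_indicator_comp {X Y : Type*} [MeasurableSpace X] [MeasurableSpace Y]
    {μ : Measure X} {F : X → ℝ} (hF : Integrable F μ) {p : X → Y} (hp : Measurable p)
    {S : Set Y} (hS : MeasurableSet S) :
    Integrable (fun x => F x * S.indicator (fun _ => (1 : ℝ)) (p x)) μ := by
  refine (hF.indicator (hp hS)).congr (ae_of_all _ fun x => ?_)
  by_cases hx : p x ∈ S <;> simp [hx]

theorem sum_integral_mul_indicator_grid {X : Type*} [MeasurableSpace X] {μ : Measure X}
    {d : ℕ} {F : X → ℝ} (hF : Integrable F μ) {p : X → EuclideanSpace ℝ (Fin d)}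
    (hp : Measurable p) (a : EuclideanSpace ℝ (Fin d)) {ℓ : ℝ} (hℓ : 0 ≤ ℓ) (M : ℕ) :
    ∑ k : Fin d → Fin M,
        ∫ x, F x * (hCube (gridCorner a ℓ k) ℓ).indicator (fun _ => (1 : ℝ)) (p x) ∂μ =
      ∫ x, F x * (hCube a (M * ℓ)).indicator (fun _ => 1) (p x) ∂μ := by
  rw [← integral_finsetSum _
    fun k _ => integrable_mul_indicator_comp hF hp (measurableSet_hCube _ _)]
  simp only [← mul_sum, sum_indicator_hCube_grid a hℓ]

section
variable {d N : ℕ} (Ψ : (Fin N → EuclideanSpace ℝ (Fin d)) → ℝ)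

theorem sum_localKinetic_grid (hint : ∀ j, Integrable fun x => ‖gradPart Ψ x j‖ ^ 2)
    (a : EuclideanSpace ℝ (Fin d)) {ℓ : ℝ} (hℓ : 0 ≤ ℓ) (M : ℕ) :
    ∑ k : Fin d → Fin M, localKinetic Ψ (gridCorner a ℓ k) ℓ = localKinetic Ψ a (M * ℓ) := by
  unfold localKinetic
  rw [sum_comm]
  exact sum_congr rfl fun j _ =>
    sum_integral_mul_indicator_grid (hint j) (measurable_pi_apply j) a hℓ M

theorem sum_localMass_grid (hΨ : Integrable fun x => Ψ x ^ 2)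
    (a : EuclideanSpace ℝ (Fin d)) {ℓ : ℝ} (hℓ : 0 ≤ ℓ) (M : ℕ) :
    ∑ k : Fin d → Fin M, localMass Ψ (gridCorner a ℓ k) ℓ = localMass Ψ a (M * ℓ) := by
  unfold localMass
  rw [sum_comm]
  exact sum_congr rfl fun j _ =>
    sum_integral_mul_indicator_grid hΨ (measurable_pi_apply j) a hℓ M

theorem localKinetic_le_kinetic (hint : ∀ j, Integrable fun x => ‖gradPart Ψ x j‖ ^ 2)
    (c : EuclideanSpace ℝ (Fin d)) (ℓ : ℝ) :
    localKinetic Ψ c ℓ ≤ ∑ j : Fin N, ∫ x, ‖gradPart Ψ x j‖ ^ 2 :=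
  sum_le_sum fun j _ =>
    integral_mono (integrable_mul_indicator_comp (hint j) (measurable_pi_apply j)
      (measurableSet_hCube c ℓ)) (hint j) fun _ =>
      mul_le_of_le_one_right (sq_nonneg _) (Set.indicator_le_self' (fun _ _ => zero_le_one) _)

theorem localMass_eq_card_of_support {a : EuclideanSpace ℝ (Fin d)} {L : ℝ}
    (hsupp : ∀ x, Ψ x ≠ 0 → ∀ j, x j ∈ hCube a L) (hnorm : ∫ x, Ψ x ^ 2 = 1) :
    localMass Ψ a L = N := by
  have hj : ∀ j, ∫ x, Ψ x ^ 2 * (hCube a L).indicator (fun _ => (1 : ℝ)) (x j) = 1 := by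
    intro j
    refine (integral_congr_ae (ae_of_all _ fun x => ?_)).trans hnorm
    by_cases hx : Ψ x = 0
    · simp [hx]
    · rw [Set.indicator_of_mem (hsupp x hx j), mul_one]
  simp [localMass, hj]

theorem le_kinetic_of_localExclusion {a : EuclideanSpace ℝ (Fin d)} {L₀ : ℝ} (hL₀ : 0 < L₀)
    (hsupp : ∀ x, Ψ x ≠ 0 → ∀ j, x j ∈ hCube a L₀) (hnorm : ∫ x, Ψ x ^ 2 = 1)
    (hint : ∀ j, Integrable fun x => ‖gradPart Ψ x j‖ ^ 2) {q : ℝ}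
    (hexcl : ∀ c ℓ, 0 < ℓ → localKinetic Ψ c ℓ ≥ Real.pi ^ 2 / ℓ ^ 2 * (localMass Ψ c ℓ - q))
    {M : ℕ} (hM : 1 ≤ M) :
    Real.pi ^ 2 / L₀ ^ 2 * (N * (M : ℝ) ^ 2 - q * (M : ℝ) ^ (d + 2)) ≤
      ∑ j : Fin N, ∫ x, ‖gradPart Ψ x j‖ ^ 2 := by
  have hM0 : (0 : ℝ) < M := Nat.cast_pos.2 hM
  set ℓ := L₀ / M
  have hℓ : 0 < ℓ := by positivity
  have hMℓ : M * ℓ = L₀ := mul_div_cancel₀ L₀ hM0.ne'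
  have hΨ : Integrable fun x => Ψ x ^ 2 := .of_integral_ne_zero (by simp [hnorm])
  calc Real.pi ^ 2 / L₀ ^ 2 * (N * (M : ℝ) ^ 2 - q * (M : ℝ) ^ (d + 2))
      = ∑ k : Fin d → Fin M, Real.pi ^ 2 / ℓ ^ 2 * (localMass Ψ (gridCorner a ℓ k) ℓ - q) := by
        rw [← mul_sum, sum_sub_distrib, sum_localMass_grid Ψ hΨ a hℓ.le, hMℓ,
          localMass_eq_card_of_support Ψ hsupp hnorm, sum_const, card_univ]
        simp only [Fintype.card_fun, Fintype.card_fin, nsmul_eq_mul, Nat.cast_pow, ← hMℓ]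
        field_simp
        ring
    _ ≤ ∑ k : Fin d → Fin M, localKinetic Ψ (gridCorner a ℓ k) ℓ :=
        sum_le_sum fun k _ => hexcl _ ℓ hℓ
    _ = localKinetic Ψ a L₀ := by rw [sum_localKinetic_grid Ψ hint a hℓ.le, hMℓ]
    _ ≤ ∑ j : Fin N, ∫ x, ‖gradPart Ψ x j‖ ^ 2 := localKinetic_le_kinetic Ψ hint a L₀

end

theorem grid_bound_eq_of_pow_eq {d : ℕ} (hd : d ≠ 0) {N q M : ℝ} (hN : 0 ≤ N) (hq : 0 < q)
    (hM : 0 ≤ M) (hMd : M ^ d = 2 * N / ((d + 2) * q)) :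
    N * M ^ 2 - q * M ^ (d + 2) =
      d / (d + 2) * (2 / (d + 2)) ^ ((2 : ℝ) / d) * q ^ (-(2 : ℝ) / d) * N ^ ((1 : ℝ) + 2 / d) := by
  have hd0 : (0 : ℝ) < d := by positivity
  have hM2 : M ^ 2 = (2 / (d + 2)) ^ ((2 : ℝ) / d) * N ^ ((2 : ℝ) / d) * q ^ (-(2 : ℝ) / d) :=
    calc M ^ 2 = (M ^ d) ^ ((2 : ℝ) / d) := by
          rw [← Real.rpow_natCast M d, ← Real.rpow_mul hM, mul_div_cancel₀ _ hd0.ne']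
          norm_cast
      _ = (2 / (d + 2) * N * q⁻¹) ^ ((2 : ℝ) / d) := by
          rw [hMd]
          congr 1
          field_simp
      _ = _ := by
          rw [Real.mul_rpow (by positivity) (by positivity), Real.mul_rpow (by positivity) hN,
            Real.inv_rpow hq.le, neg_div, Real.rpow_neg hq.le]
  calc N * M ^ 2 - q * M ^ (d + 2) = d / (d + 2) * N * M ^ 2 := by
        rw [pow_add, hMd]
        field_simp
        ring
    _ = _ := by
        rw [hM2, Real.rpow_one_add' hN (by positivity)]
        ring

theorem fermi_gas_extensivity_general (d N q : ℕ) (hd : 1 ≤ d) (hq : 1 ≤ q)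
    (Ψ : (Fin N → EuclideanSpace ℝ (Fin d)) → ℝ)
    (a : EuclideanSpace ℝ (Fin d)) (L₀ : ℝ) (hL₀ : 0 < L₀)
    (hsupp : ∀ x, Ψ x ≠ 0 → ∀ j, x j ∈ hCube a L₀)
    (hnorm : (∫ x, (Ψ x) ^ 2) = 1)
    (hint : ∀ j : Fin N, Integrable (fun x => ‖gradPart Ψ x j‖ ^ 2))
    (hexcl : ∀ (c : EuclideanSpace ℝ (Fin d)) (ℓ : ℝ), 0 < ℓ →
      localKinetic Ψ c ℓ ≥ Real.pi ^ 2 / ℓ ^ 2 * (localMass Ψ c ℓ - q)) :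
    (∀ M : ℕ, 1 ≤ M →
      (∑ j : Fin N, ∫ x, ‖gradPart Ψ x j‖ ^ 2) ≥
        Real.pi ^ 2 / L₀ ^ 2 *
          ((N : ℝ) * (M : ℝ) ^ 2 - (q : ℝ) * (M : ℝ) ^ (d + 2))) ∧
    (∀ M : ℕ, 1 ≤ M → (M : ℝ) ^ d = 2 * (N : ℝ) / (((d : ℝ) + 2) * (q : ℝ)) →
      (∑ j : Fin N, ∫ x, ‖gradPart Ψ x j‖ ^ 2) ≥
        ((d : ℝ) / ((d : ℝ) + 2)) * (2 / ((d : ℝ) + 2)) ^ ((2 : ℝ) / d) *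
          Real.pi ^ 2 * (q : ℝ) ^ (-(2 : ℝ) / d) *
          (N : ℝ) ^ ((1 : ℝ) + 2 / d) / L₀ ^ 2) := by
  have grid M (hM : 1 ≤ M) := le_kinetic_of_localExclusion Ψ hL₀ hsupp hnorm hint hexcl hM
  refine ⟨grid, fun M hM hMd => ?_⟩
  have hopt := grid_bound_eq_of_pow_eq (by omega) (Nat.cast_nonneg N)
    (by exact_mod_cast hq) (Nat.cast_nonneg M) hMd
  calc _ = Real.pi ^ 2 / L₀ ^ 2 * ((N : ℝ) * (M : ℝ) ^ 2 - (q : ℝ) * (M : ℝ) ^ (d + 2)) := by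
        rw [hopt]
        ring
    _ ≤ _ := grid M hM

/-- **Extensivity of the free Fermi gas energy**: for a normalized `N`-body
state `Ψ` supported in the cube `Q₀` of side `L₀` (so `|Q₀|^{2/d} = L₀²`)
satisfying the local exclusion bound
`T^Q[Ψ] ≥ (π²/|Q|^{2/d})(∫_Q ϱ_Ψ − q)` on every sub-cube, partitioning `Q₀`
into `M^d` equal sub-cubes yields
`T[Ψ] ≥ (π²/|Q₀|^{2/d})(N M² − q M^{d+2})` for every `M ∈ ℕ`; consequently,
for the optimal `M` (assumed integer, `M^d = 2N/((d+2)q)`),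
`T[Ψ] ≥ c_d π² q^{-2/d} N^{1+2/d}/|Q₀|^{2/d}` with
`c_d = (d/(d+2))(2/(d+2))^{2/d}`. -/
theorem fermi_gas_extensivity (d N q : ℕ) (hd : 1 ≤ d) (hN : 1 ≤ N) (hq : 1 ≤ q)
    (Ψ : (Fin N → EuclideanSpace ℝ (Fin d)) → ℝ)
    (hΨ : Differentiable ℝ Ψ)
    (a : EuclideanSpace ℝ (Fin d)) (L₀ : ℝ) (hL₀ : 0 < L₀)
    (hsupp : ∀ x, Ψ x ≠ 0 → ∀ j, x j ∈ hCube a L₀)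
    (hnorm : (∫ x, (Ψ x) ^ 2) = 1)
    (hint : ∀ j : Fin N, Integrable (fun x => ‖gradPart Ψ x j‖ ^ 2))
    (hexcl : ∀ (c : EuclideanSpace ℝ (Fin d)) (ℓ : ℝ), 0 < ℓ →
      localKinetic Ψ c ℓ ≥ Real.pi ^ 2 / ℓ ^ 2 * (localMass Ψ c ℓ - q)) :
    (∀ M : ℕ, 1 ≤ M →
      (∑ j : Fin N, ∫ x, ‖gradPart Ψ x j‖ ^ 2) ≥
        Real.pi ^ 2 / L₀ ^ 2 *
          ((N : ℝ) * (M : ℝ) ^ 2 - (q : ℝ) * (M : ℝ) ^ (d + 2))) ∧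
    (∀ M : ℕ, 1 ≤ M → (M : ℝ) ^ d = 2 * (N : ℝ) / (((d : ℝ) + 2) * (q : ℝ)) →
      (∑ j : Fin N, ∫ x, ‖gradPart Ψ x j‖ ^ 2) ≥
        ((d : ℝ) / ((d : ℝ) + 2)) * (2 / ((d : ℝ) + 2)) ^ ((2 : ℝ) / d) *
          Real.pi ^ 2 * (q : ℝ) ^ (-(2 : ℝ) / d) *
          (N : ℝ) ^ ((1 : ℝ) + 2 / d) / L₀ ^ 2) :=
  fermi_gas_extensivity_general d N q hd hq Ψ a L₀ hL₀ hsupp hnorm hint hexcl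
end
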